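/- arXiv:1210.7942 — 9 statements merged into one kernel-verified Lean document; each statement's English description precedes it below -/
import Mathlib

section
/- Let G be a group, S a subset of G, and s a positive integer. Let H be the subgroup of G generated by all products g_s · g_{s-1} · ⋯ · g_1 with each g_i ∈ S. Then H is a normal subgroup of the subgroup of G generated by S. (In the block-cipher setting: the group G_τ^s generated by all compositions of s independently keyed round functions is a normal subgroup of the group G_τ generated by the round functions.) -/
/-!
For `x ∈ S` and `t = a * b` with `a ∈ S ^ n`, `b ∈ S`, the identity
`x * t * x⁻¹ = (x * a) * (b * x ^ n) * (x ^ (n + 1))⁻¹` writes the conjugate as a word in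
`(n + 1)`-fold products, so conjugation by `x` maps `H = ⟨S ^ (n + 1)⟩` into itself. Since
moreover `x ^ (n + 1) ∈ H`, conjugation by `x⁻¹` also preserves `H`, so `S` lies in the
normalizer of `H`, and hence so does `⟨S⟩`.
-/

open Pointwise

section

variable {G : Type*} [Group G]

theorem Set.setOf_ofFn_prod_eq_pow (S : Set G) (s : ℕ) :
    {g : G | ∃ f : Fin s → G, (∀ i, f i ∈ S) ∧ g = (List.ofFn f).prod} = S ^ s := by
  ext g
  rw [Set.mem_pow]
  constructor
  · rintro ⟨f, hf, rfl⟩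
    exact ⟨fun i ↦ ⟨f i, hf i⟩, rfl⟩
  · rintro ⟨f, rfl⟩
    exact ⟨_, fun i ↦ (f i).2, rfl⟩

namespace Subgroup

theorem conj_mem_closure_of_forall_mem {T : Set G} {x : G}
    (hT : ∀ t ∈ T, x * t * x⁻¹ ∈ closure T) {h : G} (hh : h ∈ closure T) :
    x * h * x⁻¹ ∈ closure T := by
  have hmap : (closure T).map (MulAut.conj x).toMonoidHom ≤ closure T := by
    rw [MonoidHom.map_closure, closure_le]
    rintro _ ⟨t, ht, rfl⟩
    exact hT t ht
  exact hmap ⟨h, hh, rfl⟩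

theorem conj_pow_mem_of_forall_conj_mem {H : Subgroup G} {x : G}
    (hx : ∀ h ∈ H, x * h * x⁻¹ ∈ H) (n : ℕ) {h : G} (hh : h ∈ H) :
    x ^ n * h * (x ^ n)⁻¹ ∈ H := by
  induction n with
  | zero => simpa using hh
  | succ n ih =>
    rw [show x ^ (n + 1) * h * (x ^ (n + 1))⁻¹ = x * (x ^ n * h * (x ^ n)⁻¹) * x⁻¹ by group]
    exact hx _ ih

theorem mem_normalizer_of_forall_conj_mem_of_pow_mem {H : Subgroup G} {x : G} {n : ℕ}
    (hx : ∀ h ∈ H, x * h * x⁻¹ ∈ H) (hpow : x ^ (n + 1) ∈ H) : x ∈ normalizer (H : Set G) := by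
  refine mem_normalizer_iff.mpr fun h ↦ ⟨hx h, fun hconj ↦ ?_⟩
  have hback : h = (x ^ (n + 1))⁻¹ * (x ^ n * (x * h * x⁻¹) * (x ^ n)⁻¹) * x ^ (n + 1) := by
    group
  rw [hback]
  exact mul_mem (mul_mem (inv_mem hpow) (conj_pow_mem_of_forall_conj_mem hx n hconj)) hpow

theorem conj_mem_closure_pow_succ {S : Set G} {x t : G} {n : ℕ} (hx : x ∈ S)
    (ht : t ∈ S ^ (n + 1)) : x * t * x⁻¹ ∈ closure (S ^ (n + 1)) := by
  rw [pow_succ] at ht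
  obtain ⟨a, ha, b, hb, rfl⟩ := ht
  have hxa : x * a ∈ S ^ (n + 1) := pow_succ' S n ▸ Set.mul_mem_mul hx ha
  have hbx : b * x ^ n ∈ S ^ (n + 1) := pow_succ' S n ▸ Set.mul_mem_mul hb (Set.pow_mem_pow hx)
  have hxpow : x ^ (n + 1) ∈ S ^ (n + 1) := Set.pow_mem_pow hx
  rw [show x * (a * b) * x⁻¹ = x * a * (b * x ^ n) * (x ^ (n + 1))⁻¹ by group]
  exact mul_mem (mul_mem (subset_closure hxa) (subset_closure hbx))
    (inv_mem (subset_closure hxpow))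

theorem closure_le_normalizer_closure_pow_succ (S : Set G) (n : ℕ) :
    closure S ≤ normalizer (closure (S ^ (n + 1)) : Set G) := by
  rw [closure_le]
  intro x hx
  exact mem_normalizer_of_forall_conj_mem_of_pow_mem
    (fun _ ↦ conj_mem_closure_of_forall_mem fun _ ↦ conj_mem_closure_pow_succ hx)
    (subset_closure (Set.pow_mem_pow hx))

end Subgroup

end

/-- The subgroup generated by all `s`-fold products `g_s * g_{s-1} * ⋯ * g_1` of elements
of `S` is a normal subgroup of the subgroup generated by `S`. -/
theorem stmt_0 (G : Type*) [Group G] (S : Set G) (s : ℕ) (hs : 0 < s) :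
    Subgroup.closure {g : G | ∃ f : Fin s → G, (∀ i, f i ∈ S) ∧ g = (List.ofFn f).prod} ≤
        Subgroup.closure S ∧
      ∀ x ∈ Subgroup.closure S,
        ∀ h ∈ Subgroup.closure
            {g : G | ∃ f : Fin s → G, (∀ i, f i ∈ S) ∧ g = (List.ofFn f).prod},
          x * h * x⁻¹ ∈
            Subgroup.closure
              {g : G | ∃ f : Fin s → G, (∀ i, f i ∈ S) ∧ g = (List.ofFn f).prod} := by
  obtain ⟨n, rfl⟩ := Nat.exists_eq_add_of_lt hs
  rw [Set.setOf_ofFn_prod_eq_pow, zero_add]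
  refine ⟨Subgroup.closure_pow_le, fun x hx h hh ↦ ?_⟩
  exact (Subgroup.mem_normalizer_iff.mp
    (Subgroup.closure_le_normalizer_closure_pow_succ S n hx) h).mp hh
end

section
/- Let F be a finite field with |F| = p^n (p prime) and let H be an additive subgroup of F with H ≠ {0} which is inverse-closed, meaning that for every nonzero x ∈ H one has x^{-1} ∈ H. Then |H| = p^k for some positive integer k dividing n. -/
/-!
Hua's identity `x - (x⁻¹ + (h⁻¹ - x)⁻¹)⁻¹ = x²h` shows that an inverse-closed additive subgroup
`H` satisfies `x²H ⊆ H` for every `x ∈ H`, i.e. squares of elements of `H` lie in the multiplier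
field `K = {a | aH ⊆ H}`. For `x, y ∈ H` with `x ≠ 0`, both `t = y/x` and `t + 1 = (x + y)/x`
then have squares in `K`, which forces `t ∈ K`: through `2t` in odd characteristic, and through
`t = (t²)^(|F|/2)` in characteristic `2`. Hence `H = Kx`, so `|H| = |K|`, and `F` is a vector
space over the subfield `K`.
-/

theorem hua_identity {F : Type*} [Field F] {x h : F} (hx : x ≠ 0) (hh : h ≠ 0)
    (hxh : x * h ≠ 1) : x - (x⁻¹ + (h⁻¹ - x)⁻¹)⁻¹ = x ^ 2 * h := by
  have : 1 - x * h ≠ 0 := sub_ne_zero.2 hxh.symm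
  field_simp
  ring

theorem Subring.inv_mem_of_finite {F : Type*} [Field F] [Finite F] (S : Subring F) {a : F}
    (ha : a ∈ S) : a⁻¹ ∈ S := by
  have := Fintype.ofFinite F
  rcases eq_or_ne a 0 with rfl | ha0
  · simp
  have hq : 1 ≤ Fintype.card F - 1 := Nat.le_sub_one_of_lt Fintype.one_lt_card
  have : a⁻¹ = a ^ (Fintype.card F - 1 - 1) := by
    rw [pow_sub₀ a ha0 hq, FiniteField.pow_card_sub_one_eq_one a ha0, pow_one, one_mul]
  exact this ▸ S.pow_mem ha _

namespace Subfield

variable {F : Type*} [Field F] [Finite F] (K : Subfield F)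

theorem mem_of_sq_mem_of_add_one_sq_mem {t : F} (ht : t ^ 2 ∈ K) (ht₁ : (t + 1) ^ 2 ∈ K) :
    t ∈ K := by
  have := Fintype.ofFinite F
  by_cases hF : ringChar F = 2
  · have hq : Fintype.card F = 2 * (Fintype.card F / 2) :=
      (Nat.mul_div_cancel' (Nat.dvd_of_mod_eq_zero (FiniteField.even_card_of_char_two hF))).symm
    rw [← FiniteField.pow_card t, hq, pow_mul]
    exact K.pow_mem ht _
  · have h2 : (2 : F) ≠ 0 := Ring.two_ne_zero hF
    have : t = 2⁻¹ * ((t + 1) ^ 2 - t ^ 2 - 1) := by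
      field_simp
      ring
    rw [this]
    exact K.mul_mem (K.inv_mem (ofNat_mem K 2)) (K.sub_mem (K.sub_mem ht₁ ht) K.one_mem)

theorem exists_pos_dvd_natCard_eq_pow {p n : ℕ} (hp : p.Prime) (hF : Nat.card F = p ^ n) :
    ∃ k : ℕ, 0 < k ∧ k ∣ n ∧ Nat.card K = p ^ k := by
  have hFK : Nat.card F = Nat.card K ^ Module.finrank K F := Module.natCard_eq_pow_finrank
  have hd : Module.finrank K F ≠ 0 := Module.finrank_pos.ne'
  obtain ⟨k, -, hK⟩ := (Nat.dvd_prime_pow hp).1 (hF ▸ hFK ▸ dvd_pow_self _ hd)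
  have hk : k ≠ 0 := by
    rintro rfl
    exact (Finite.one_lt_card (α := K)).ne' hK
  refine ⟨k, Nat.pos_of_ne_zero hk, ⟨Module.finrank K F, ?_⟩, hK⟩
  apply Nat.pow_right_injective hp.two_le
  simp only
  rw [pow_mul, ← hK, ← hFK, hF]

end Subfield

namespace AddSubgroup

variable {F : Type*} [Field F] (H : AddSubgroup F)

def multiplierSubring : Subring F where
  carrier := {a | ∀ h ∈ H, a * h ∈ H}
  zero_mem' h _ := by simp
  one_mem' h hh := by simpa using hh
  add_mem' {a b} ha hb h hh := add_mul a b h ▸ H.add_mem (ha h hh) (hb h hh)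
  neg_mem' {a} ha h hh := neg_mul a h ▸ H.neg_mem (ha h hh)
  mul_mem' {a b} ha hb h hh := (mul_assoc a b h).symm ▸ ha _ (hb h hh)

def multiplierSubfield [Finite F] : Subfield F :=
  { H.multiplierSubring with inv_mem' := fun _ => H.multiplierSubring.inv_mem_of_finite }

theorem mem_multiplierSubfield [Finite F] {a : F} :
    a ∈ H.multiplierSubfield ↔ ∀ h ∈ H, a * h ∈ H := by
  rfl

variable {H} (hinv : ∀ x ∈ H, x⁻¹ ∈ H)
include hinv

theorem sq_mul_mem {x h : F} (hx : x ∈ H) (hh : h ∈ H) : x ^ 2 * h ∈ H := by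
  rcases eq_or_ne x 0 with rfl | hx0
  · simp
  rcases eq_or_ne h 0 with rfl | hh0
  · simp
  rcases eq_or_ne (x * h) 1 with hxh | hxh
  · rwa [sq, mul_assoc, hxh, mul_one]
  rw [← hua_identity hx0 hh0 hxh]
  exact H.sub_mem hx (hinv _ (H.add_mem (hinv x hx) (hinv _ (H.sub_mem (hinv h hh) hx))))

variable [Finite F]

theorem sq_mem_multiplierSubfield {x : F} (hx : x ∈ H) : x ^ 2 ∈ H.multiplierSubfield :=
  H.mem_multiplierSubfield.2 fun _ hh => sq_mul_mem hinv hx hh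

theorem mul_inv_mem_multiplierSubfield {x y : F} (hx : x ∈ H) (hy : y ∈ H) :
    y * x⁻¹ ∈ H.multiplierSubfield := by
  rcases eq_or_ne x 0 with rfl | hx0
  · simp
  apply Subfield.mem_of_sq_mem_of_add_one_sq_mem
  · rw [mul_pow]
    exact mul_mem (sq_mem_multiplierSubfield hinv hy) (sq_mem_multiplierSubfield hinv (hinv x hx))
  · rw [← mul_inv_cancel_right₀ hx0 1, one_mul, ← add_mul, mul_pow]
    exact mul_mem (sq_mem_multiplierSubfield hinv (H.add_mem hy hx))
      (sq_mem_multiplierSubfield hinv (hinv x hx))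

theorem natCard_multiplierSubfield {x : F} (hx : x ∈ H) (hx0 : x ≠ 0) :
    Nat.card H.multiplierSubfield = Nat.card H :=
  Nat.card_congr
    { toFun a := ⟨a * x, H.mem_multiplierSubfield.1 a.2 x hx⟩
      invFun y := ⟨y * x⁻¹, mul_inv_mem_multiplierSubfield hinv hx y.2⟩
      left_inv a := Subtype.ext (mul_inv_cancel_right₀ hx0 a)
      right_inv y := Subtype.ext (inv_mul_cancel_right₀ hx0 y) }

end AddSubgroup

/-- Any non-trivial inverse-closed additive subgroup `H` of a finite field of order `p^n`
has `p^k` elements for some positive `k` dividing `n`. -/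
theorem stmt_2 (p n : ℕ) (hp : p.Prime) (F : Type*) [Field F] [Fintype F]
    (hF : Fintype.card F = p ^ n) (H : AddSubgroup F) (hH : H ≠ ⊥)
    (hinv : ∀ x ∈ H, x ≠ 0 → x⁻¹ ∈ H) :
    ∃ k : ℕ, 0 < k ∧ k ∣ n ∧ Nat.card H = p ^ k := by
  -- with `0⁻¹ = 0`, `H` is closed under `⁻¹` outright
  have hinv' : ∀ x ∈ H, x⁻¹ ∈ H := fun x hx => by
    rcases eq_or_ne x 0 with rfl | hx0
    · simp
    · exact hinv x hx hx0
  obtain ⟨x, hx, hx0⟩ := H.bot_or_exists_ne_zero.resolve_left hH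
  obtain ⟨k, hk, hkn, hK⟩ := H.multiplierSubfield.exists_pos_dvd_natCard_eq_pow hp
    (Nat.card_eq_fintype_card.trans hF)
  exact ⟨k, hk, hkn, (AddSubgroup.natCard_multiplierSubfield hinv' hx hx0).symm.trans hK⟩
end

section
/- Let F be a finite field and let f : F → F be the map with f(0) = 0 and f(x) = x^{-1} for x ≠ 0. Then f is an odd permutation of F if and only if |F| ≡ 0 (mod 4) or |F| ≡ 1 (mod 4). (Equivalently: for |F| = q odd, f is odd iff q ≡ 1 (mod 4); for q = 2^r, f is odd iff r ≥ 2.) -/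
/-!
The inversion map is an involution, so its sign is `(-1) ^ (m / 2)` where `m` counts the points it
moves. Its fixed points are the roots of `x ^ 3 = x`, namely `0, 1, -1`. In characteristic two
`m = 2 ^ r - 2`, and `m / 2 = 2 ^ (r - 1) - 1` is odd exactly when `r ≥ 2`; in odd characteristic
`m = q - 3`, and `(q - 3) / 2` is odd exactly when `q ≡ 1 (mod 4)`.
-/

open Finset

namespace Equiv.Perm

variable {α : Type*} [Fintype α] [DecidableEq α]

theorem sign_eq_neg_one_iff_of_pow_two_eq_one {σ : Perm α} (hσ : σ ^ 2 = 1) :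
    sign σ = -1 ↔ Odd ((Fintype.card α - Fintype.card (Function.fixedPoints σ)) / 2) := by
  rw [sign_of_pow_two_eq_one hσ]
  rcases Nat.even_or_odd ((Fintype.card α - Fintype.card (Function.fixedPoints σ)) / 2) with h | h
  · simp only [h.neg_one_pow, Nat.not_odd_iff_even.mpr h, iff_false]
    decide
  · simp only [h.neg_one_pow, h]

end Equiv.Perm

theorem card_fixedPoints_eq_of_forall_apply_eq_inv {K : Type*} [DivisionRing K] [Fintype K]
    [DecidableEq K] {f : Equiv.Perm K} (hf : ∀ x, f x = x⁻¹) :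
    Fintype.card (Function.fixedPoints f) = #({-1, 0, 1} : Finset K) := by
  rw [← Set.toFinset_card]
  congr 1
  ext x
  simp [Function.IsFixedPt, hf, inv_eq_self₀]

section Ring

variable {R : Type*} [Ring R] [Nontrivial R] [DecidableEq R]

theorem card_neg_one_zero_one_of_neg_one_eq_one (h : (-1 : R) = 1) :
    #({-1, 0, 1} : Finset R) = 2 := by
  rw [h, pair_comm, Finset.insert_eq_of_mem (by simp)]
  exact card_pair one_ne_zero

theorem card_neg_one_zero_one_of_neg_one_ne_one (h : (-1 : R) ≠ 1) :
    #({-1, 0, 1} : Finset R) = 3 := by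
  rw [card_insert_of_notMem (by simp [h]), card_pair zero_ne_one]

end Ring

theorem FiniteField.card_eq_two_or_four_dvd_of_ringChar_eq_two {F : Type*} [Field F] [Fintype F]
    (h : ringChar F = 2) : Fintype.card F = 2 ∨ 4 ∣ Fintype.card F := by
  have := ringChar.of_eq h
  obtain ⟨⟨_ | _ | r, hr⟩, -, hcard⟩ := FiniteField.card F 2
  · cases hr
  · exact Or.inl hcard
  · exact Or.inr ⟨2 ^ r, by rw [hcard, PNat.mk_coe]; ring⟩

/-- The inversion map `f` on a finite field `F` (with `f 0 = 0`, `f x = x⁻¹` otherwise)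
is an odd permutation iff `|F| ≡ 0 (mod 4)` or `|F| ≡ 1 (mod 4)`. -/
theorem stmt_4 (F : Type*) [Field F] [Fintype F] [DecidableEq F]
    (f : Equiv.Perm F) (hf : ∀ x : F, f x = x⁻¹) :
    Equiv.Perm.sign f = -1 ↔ (Fintype.card F % 4 = 0 ∨ Fintype.card F % 4 = 1) := by
  have hf2 : f ^ 2 = 1 := by
    ext x
    simp [sq, hf]
  rw [Equiv.Perm.sign_eq_neg_one_iff_of_pow_two_eq_one hf2,
    card_fixedPoints_eq_of_forall_apply_eq_inv hf, Nat.odd_iff]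
  have hq : 1 < Fintype.card F := Fintype.one_lt_card
  by_cases hchar : ringChar F = 2
  · rw [card_neg_one_zero_one_of_neg_one_eq_one (neg_one_eq_one_iff.mpr hchar)]
    rcases FiniteField.card_eq_two_or_four_dvd_of_ringChar_eq_two hchar with h | h <;> omega
  · rw [card_neg_one_zero_one_of_neg_one_ne_one (Ring.neg_one_ne_one_of_char_ne_two hchar)]
    have := FiniteField.odd_card_of_char_ne_two hchar
    omega
end

section
/- Let F be a finite field and let A be a nonzero element of F. The permutation of F given by x ↦ A·x is an odd permutation if and only if the multiplicative order ord(A) of A is even and (|F| − 1)/ord(A) is odd. In particular, for |F| even this permutation is always even, and for |F| odd it is odd if and only if (|F| − 1)/ord(A) is odd. -/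
/-!
Multiplication by `A` fixes `0` and acts freely on the nonzero elements through the cyclic group
`⟨A⟩` of order `d = ord(A)`, so it is a product of `(|F| - 1)/d` disjoint `d`-cycles and its
sign is `((-1)^(d-1))^((|F| - 1)/d)`. The remaining claims are parity bookkeeping using
`d ∣ |F| - 1`.
-/

open Equiv Finset

namespace Equiv.Perm

variable {α : Type*} [Fintype α] [DecidableEq α] {σ : Perm α}

theorem orderOf_eq_of_mem_cycleFactorsFinset
    (hσ : ∀ x ∈ σ.support, ∀ n : ℕ, (σ ^ n) x = x → σ ^ n = 1) {c : Perm α}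
    (hc : c ∈ σ.cycleFactorsFinset) : orderOf c = orderOf σ := by
  have hcycle := (mem_cycleFactorsFinset_iff.mp hc).1
  obtain ⟨x, hx⟩ := hcycle.nonempty_support
  have hxσ : x ∈ σ.support := mem_cycleFactorsFinset_support_le hc hx
  rw [orderOf_eq_orderOf_iff]
  intro n
  rw [hcycle.pow_eq_one_iff' (mem_support.mp hx), cycle_is_cycleOf hx hc,
    cycleOf_pow_apply_self]
  exact ⟨hσ x hxσ n, fun h => by rw [h, one_apply]⟩

theorem eq_orderOf_of_mem_cycleType
    (hσ : ∀ x ∈ σ.support, ∀ n : ℕ, (σ ^ n) x = x → σ ^ n = 1) {n : ℕ}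
    (hn : n ∈ σ.cycleType) : n = orderOf σ := by
  obtain ⟨c, hc, rfl⟩ := Multiset.mem_map.mp hn
  exact ((mem_cycleFactorsFinset_iff.mp hc).1.orderOf).symm.trans
    (orderOf_eq_of_mem_cycleFactorsFinset hσ hc)

theorem sign_of_forall_mem_cycleType_eq {d : ℕ} (h : ∀ n ∈ σ.cycleType, n = d) :
    sign σ = (-(-1) ^ d) ^ (#σ.support / d) := by
  have hrep : σ.cycleType = Multiset.replicate (Multiset.card σ.cycleType) d :=
    Multiset.eq_replicate_card.mpr h
  have hcard : #σ.support = Multiset.card σ.cycleType * d := by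
    rw [← sum_cycleType, hrep, Multiset.sum_replicate, smul_eq_mul, Multiset.card_replicate]
  rcases Nat.eq_zero_or_pos d with rfl | hd
  · rw [mul_zero, card_support_eq_zero] at hcard
    simp [hcard]
  · rw [sign_of_cycleType', hrep, Multiset.map_replicate, Multiset.prod_replicate,
      hcard, Nat.mul_div_cancel _ hd]

end Equiv.Perm

theorem Int.units_neg_neg_one_pow_pow_eq_neg_one_iff (d k : ℕ) :
    (-(-1 : ℤˣ) ^ d) ^ k = -1 ↔ Even d ∧ Odd k := by
  rcases Nat.even_or_odd d with hd | hd
  · rw [hd.neg_one_pow, neg_one_pow_eq_neg_one_iff_odd (by decide)]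
    exact (and_iff_right hd).symm
  · rw [hd.neg_one_pow, neg_neg, one_pow]
    simp [Nat.not_even_iff_odd.mpr hd]

theorem Nat.even_and_odd_div_iff {d m : ℕ} (hdm : d ∣ m) :
    Even d ∧ Odd (m / d) ↔ Even m ∧ Odd (m / d) := by
  obtain ⟨k, rfl⟩ := hdm
  rcases Nat.eq_zero_or_pos d with rfl | hd
  · simp
  rw [Nat.mul_div_cancel_left k hd, Nat.even_mul]
  constructor
  · exact fun ⟨hde, hk⟩ => ⟨Or.inl hde, hk⟩
  · exact fun ⟨hdk, hk⟩ => ⟨hdk.resolve_right (Nat.not_even_iff_odd.mpr hk), hk⟩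

section MulLeft

variable {M : Type*} [Monoid M] {A : M} {g : Perm M}

theorem pow_apply_of_forall_apply_eq_mul (hg : ∀ x, g x = A * x) (n : ℕ) (x : M) :
    (g ^ n) x = A ^ n * x := by
  induction n with
  | zero => simp
  | succ n ih => rw [pow_succ', Perm.mul_apply, ih, hg, pow_succ', mul_assoc]

theorem pow_eq_one_iff_of_forall_apply_eq_mul (hg : ∀ x, g x = A * x) {n : ℕ} :
    g ^ n = 1 ↔ A ^ n = 1 := by
  constructor
  · intro h
    simpa [pow_apply_of_forall_apply_eq_mul hg] using congr($h 1)
  · intro h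
    ext x
    simp [pow_apply_of_forall_apply_eq_mul hg, h]

theorem orderOf_eq_of_forall_apply_eq_mul (hg : ∀ x, g x = A * x) : orderOf g = orderOf A :=
  orderOf_eq_orderOf_iff.mpr fun _ => pow_eq_one_iff_of_forall_apply_eq_mul hg

end MulLeft

section MulLeft₀

variable {M₀ : Type*} [MonoidWithZero M₀] [IsRightCancelMulZero M₀] [Fintype M₀]
  [DecidableEq M₀] {A : M₀} {g : Perm M₀}

theorem support_eq_of_forall_apply_eq_mul (hg : ∀ x, g x = A * x) (hA : A ≠ 1) :
    g.support = univ.erase 0 := by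
  ext x
  simp [hg, mul_left_eq_self₀, hA]

theorem pow_eq_one_of_pow_apply_eq_self_of_forall_apply_eq_mul (hg : ∀ x, g x = A * x)
    {x : M₀} (hx : x ∈ g.support) {n : ℕ} (h : (g ^ n) x = x) : g ^ n = 1 := by
  have hx0 : x ≠ 0 := fun h0 => by simp [h0, hg] at hx
  rw [pow_apply_of_forall_apply_eq_mul hg, mul_left_eq_self₀, or_iff_left hx0] at h
  exact (pow_eq_one_iff_of_forall_apply_eq_mul hg).mpr h

theorem sign_eq_neg_one_iff_of_forall_apply_eq_mul (hg : ∀ x, g x = A * x) :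
    Perm.sign g = -1 ↔
      Even (orderOf A) ∧ Odd ((Fintype.card M₀ - 1) / orderOf A) := by
  have hcycleType (n : ℕ) (hn : n ∈ g.cycleType) : n = orderOf A :=
    (Perm.eq_orderOf_of_mem_cycleType
      (fun _ hx _ => pow_eq_one_of_pow_apply_eq_self_of_forall_apply_eq_mul hg hx) hn).trans
      (orderOf_eq_of_forall_apply_eq_mul hg)
  rw [Perm.sign_of_forall_mem_cycleType_eq hcycleType,
    Int.units_neg_neg_one_pow_pow_eq_neg_one_iff]
  refine and_congr_right fun hA => ?_
  have hA1 : A ≠ 1 := by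
    rintro rfl
    simp at hA
  rw [support_eq_of_forall_apply_eq_mul hg hA1, card_erase_of_mem (mem_univ _), card_univ]

end MulLeft₀

/-- For `A ≠ 0` in a finite field `F`, the permutation `x ↦ A·x` is odd iff `ord(A)` is even
and `(|F| - 1)/ord(A)` is odd.  In particular it is always even when `|F|` is even, and for
`|F|` odd it is odd iff `(|F| - 1)/ord(A)` is odd. -/
theorem stmt_5 (F : Type*) [Field F] [Fintype F] [DecidableEq F]
    (A : F) (hA : A ≠ 0) (g : Equiv.Perm F) (hg : ∀ x : F, g x = A * x) :
    (Equiv.Perm.sign g = -1 ↔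
      Even (orderOf A) ∧ Odd ((Fintype.card F - 1) / orderOf A)) ∧
    (Even (Fintype.card F) → Equiv.Perm.sign g = 1) ∧
    (Odd (Fintype.card F) →
      (Equiv.Perm.sign g = -1 ↔ Odd ((Fintype.card F - 1) / orderOf A))) := by
  have hsign := sign_eq_neg_one_iff_of_forall_apply_eq_mul hg
  have hsign_card := hsign.trans (Nat.even_and_odd_div_iff
    (orderOf_dvd_of_pow_eq_one (FiniteField.pow_card_sub_one_eq_one A hA)))
  refine ⟨hsign, fun hq => ?_, fun hq => ?_⟩
  · refine (Int.units_eq_one_or _).resolve_right fun h => ?_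
    exact Nat.not_even_iff_odd.mpr (Nat.Even.sub_odd Fintype.card_pos hq odd_one) (hsign_card.mp h).1
  · exact hsign_card.trans (and_iff_right (Nat.Odd.sub_odd hq odd_one))
end

section
/- Let p > 2 be a prime, r, m, n ≥ 1, F = GF(p^r), and V = M_{m,n}(F). Fix c : {0,…,m−1} → {0,…,n−1} and let π : V → V be the ShiftRows-like map. Then π is an odd permutation if and only if p ≡ 3 (mod 4), n is even, r is odd, and gcd(n, c(i)) is odd for an odd number of indices i ∈ {0,…,m−1}. -/
/-!
Uncurrying identifies `π` with precomposition by the permutation `σ` of `Fin m × ℤ/n` that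
rotates row `i` by `c i`. On functions `X → F` with `|F| = q` odd, precomposition by a
transposition is an involution moving `q ^ (|X| - 1) * (q - 1)` points, so it has sign
`(-1) ^ ((q - 1) / 2)`; hence `sign π = sign σ ^ ((q - 1) / 2)`. A rotation by `c` of `ℤ/n` is the
`c`-th power of an `n`-cycle, of sign `(-1) ^ ((n - 1) * c)`, and `(n - 1) * c` is odd exactly when
`n` is even and `gcd n c` is odd. Finally `(p ^ r - 1) / 2` is odd iff `p ^ r ≡ 3 (mod 4)`, i.e.
iff `p ≡ 3 (mod 4)` and `r` is odd.
-/

open Equiv Equiv.Perm Finset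

lemma arrowCongr_mul_refl {X F : Type*} (σ τ : Perm X) :
    (arrowCongr (σ * τ) (Equiv.refl F) : Perm (X → F)) =
      arrowCongr σ (Equiv.refl F) * arrowCongr τ (Equiv.refl F) := by
  rw [Perm.mul_def, Perm.mul_def, ← arrowCongr_trans]
  rfl

section FunctionSpace

variable {X F : Type*} [DecidableEq X] [Fintype X] [DecidableEq F] [Fintype F]

lemma card_subtype_apply_eq_apply {a b : X} (hab : a ≠ b) :
    Fintype.card {f : X → F // f a = f b} = Fintype.card F ^ (Fintype.card X - 1) := by
  let e : {f : X → F // f a = f b} ≃ ({x // x ≠ b} → F) :=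
    { toFun f x := f.1 x
      invFun g := ⟨fun x => if h : x = b then g ⟨a, hab⟩ else g ⟨x, h⟩, by simp [hab]⟩
      left_inv f := by
        ext x
        by_cases h : x = b
        · subst h; simpa using f.2
        · simp [h]
      right_inv g := by
        ext x
        simp [x.2] }
  rw [Fintype.card_congr e, Fintype.card_fun, Fintype.card_subtype_compl, Fintype.card_subtype_eq]

lemma sign_arrowCongr_swap (hF : Odd (Fintype.card F)) {a b : X} (hab : a ≠ b) :
    sign (arrowCongr (swap a b) (Equiv.refl F) : Perm (X → F)) =
      (-1) ^ ((Fintype.card F - 1) / 2) := by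
  set g : Perm (X → F) := arrowCongr (swap a b) (Equiv.refl F)
  have hg : g ^ 2 = 1 := by
    rw [sq, ← arrowCongr_mul_refl, swap_mul_self]
    ext f x
    rfl
  have hfix : Fintype.card (Function.fixedPoints g) = Fintype.card F ^ (Fintype.card X - 1) := by
    rw [← card_subtype_apply_eq_apply hab]
    refine Fintype.card_congr (Equiv.subtypeEquivRight fun f => ?_)
    have hgf (x : X) : g f x = f (swap a b x) := rfl
    simp only [Function.mem_fixedPoints_iff, funext_iff, hgf]
    refine ⟨fun h => by simpa using (h a).symm, fun h x => ?_⟩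
    rw [swap_apply_def]
    split_ifs <;> simp_all
  obtain ⟨N, hN⟩ : ∃ N, Fintype.card X = N + 1 :=
    Nat.exists_eq_add_one.mpr (Fintype.card_pos_iff.mpr ⟨a⟩)
  rw [sign_of_pow_two_eq_one hg, hfix, Fintype.card_fun, hN, Nat.add_sub_cancel, pow_succ,
    ← Nat.mul_sub_one, Nat.mul_div_assoc _ (Nat.Odd.sub_odd hF odd_one).two_dvd, pow_mul,
    (hF.pow).neg_one_pow]

lemma sign_arrowCongr (hF : Odd (Fintype.card F)) (σ : Perm X) :
    sign (arrowCongr σ (Equiv.refl F) : Perm (X → F)) = sign σ ^ ((Fintype.card F - 1) / 2) := by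
  induction σ using swap_induction_on with
  | one => rw [map_one, one_pow]; exact map_one sign
  | swap_mul f x y hxy ih =>
    rw [arrowCongr_mul_refl, map_mul, map_mul, sign_arrowCongr_swap hF hxy, ih, sign_swap hxy,
      mul_pow]

end FunctionSpace

open Fin.NatCast in
lemma finRotate_pow {n : ℕ} [NeZero n] (j : ℕ) :
    finRotate n ^ j = Equiv.addRight (j : Fin n) := by
  induction j with
  | zero => ext x; simp
  | succ j ih =>
    ext x
    rw [pow_succ', mul_apply, ih, finRotate_apply, coe_addRight, coe_addRight, Nat.cast_succ,
      add_assoc]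

open Fin.NatCast in
lemma sign_addRight {n : ℕ} [NeZero n] (k : Fin n) :
    sign (Equiv.addRight k) = (-1) ^ ((n - 1) * k.val) := by
  rw [← Fin.cast_val_eq_self k, ← finRotate_pow, map_pow, sign_finRotate, ← pow_mul,
    Fin.cast_val_eq_self]

lemma Nat.pow_mod_four_eq_three_iff {p : ℕ} (hp : Odd p) (r : ℕ) :
    p ^ r % 4 = 3 ↔ p % 4 = 3 ∧ Odd r := by
  have hp4 : p ^ 2 % 4 = 1 := by
    obtain ⟨k, rfl⟩ := hp
    ring_nf
    omega
  rcases Nat.even_or_odd' r with ⟨k, rfl | rfl⟩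
  · rw [pow_mul, Nat.pow_mod, hp4, one_pow]
    simp
  · rw [pow_succ, pow_mul, Nat.mul_mod, Nat.pow_mod, hp4, one_pow]
    simp

lemma Nat.odd_sub_one_div_two_iff {q : ℕ} (hq : Odd q) : Odd ((q - 1) / 2) ↔ q % 4 = 3 := by
  rw [Nat.odd_iff] at hq ⊢
  omega

lemma Nat.odd_sub_one_mul_iff {n : ℕ} (hn : n ≠ 0) (k : ℕ) :
    Odd ((n - 1) * k) ↔ Even n ∧ Odd (n.gcd k) := by
  rw [Nat.odd_mul, ← Nat.not_even_iff_odd (n := n.gcd k), even_iff_two_dvd (a := n.gcd k),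
    Nat.dvd_gcd_iff, Nat.odd_iff, Nat.odd_iff, Nat.even_iff, Nat.dvd_iff_mod_eq_zero, Nat.dvd_iff_mod_eq_zero]
  omega

lemma sign_shiftRows {ι F : Type*} [Fintype ι] [DecidableEq ι] [Fintype F]
    [DecidableEq F] {n : ℕ} [NeZero n] (hF : Odd (Fintype.card F)) (c : ι → Fin n)
    (π : Perm (Matrix ι (Fin n) F)) (hπ : ∀ a i j, π a i j = a i (j - c i)) :
    sign π = (-1) ^ ((∑ i, (n - 1) * (c i).val) * ((Fintype.card F - 1) / 2)) := by
  have hσ : sign π =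
      sign (arrowCongr (prodCongrRight fun i => Equiv.addRight (c i)) (Equiv.refl F)) :=
    sign_eq_sign_of_equiv _ _ (Equiv.curry ι (Fin n) F).symm fun a => by
      ext ⟨i, j⟩
      exact (hπ a i j).trans (by rw [sub_eq_add_neg]; rfl)
  rw [hσ, sign_arrowCongr hF, sign_prodCongrRight]
  simp_rw [sign_addRight]
  rw [prod_pow_eq_pow_sum, pow_mul]

theorem stmt_7_general (p r m n : ℕ) (hp : p.Prime) (hp2 : 2 < p)
    (hn : 1 ≤ n)
    (F : Type*) [Fintype F] [DecidableEq F] (hF : Fintype.card F = p ^ r)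
    (c : Fin m → Fin n)
    (piP : Equiv.Perm (Matrix (Fin m) (Fin n) F))
    (hpi : ∀ (a : Matrix (Fin m) (Fin n) F) (i : Fin m) (j : Fin n),
      piP a i j = a i (j - c i)) :
    Equiv.Perm.sign piP = -1 ↔
      p % 4 = 3 ∧ Even n ∧ Odd r ∧
        Odd (Finset.univ.filter fun i : Fin m => Odd (Nat.gcd n (c i).val)).card := by
  have : NeZero n := ⟨by omega⟩
  have hp_odd : Odd p := hp.odd_of_ne_two hp2.ne'
  have hq : Odd (Fintype.card F) := hF ▸ hp_odd.pow
  rw [sign_shiftRows hq c piP hpi, neg_one_pow_eq_neg_one_iff_odd (by decide),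
    Nat.odd_mul, Finset.odd_sum_iff_odd_card_odd, Nat.odd_sub_one_div_two_iff hq, hF,
    Nat.pow_mod_four_eq_three_iff hp_odd]
  simp_rw [Nat.odd_sub_one_mul_iff (n := n) (by omega)]
  by_cases h : Even n
  · simp only [h, true_and]
    tauto
  · simp [h]

/-- Parity of the ShiftRows-like permutation `π` on `M_{m,n}(GF(p^r))` for `p > 2`:
`π` is odd iff `p ≡ 3 (mod 4)`, `n` is even, `r` is odd, and `gcd(n, c(i))` is odd for an
odd number of indices `i`. -/
theorem stmt_7 (p r m n : ℕ) (hp : p.Prime) (hp2 : 2 < p)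
    (hr : 1 ≤ r) (hm : 1 ≤ m) (hn : 1 ≤ n)
    (F : Type*) [Field F] [Fintype F] [DecidableEq F] (hF : Fintype.card F = p ^ r)
    (c : Fin m → Fin n)
    (piP : Equiv.Perm (Matrix (Fin m) (Fin n) F))
    (hpi : ∀ (a : Matrix (Fin m) (Fin n) F) (i : Fin m) (j : Fin n),
      piP a i j = a i (j - c i)) :
    Equiv.Perm.sign piP = -1 ↔
      p % 4 = 3 ∧ Even n ∧ Odd r ∧
        Odd (Finset.univ.filter fun i : Fin m => Odd (Nat.gcd n (c i).val)).card :=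
  stmt_7_general p r m n hp hp2 hn F hF c piP hpi
end

section
/- Let r, m ≥ 1 and n > 2, F = GF(2^r), and V = M_{m,n}(F). For every s > 1 and every choice of subkeys k_1, …, k_{s+1} ∈ V, the s-round Rijndael-like function T_s = σ[k_{s+1}] ∘ π ∘ λ ∘ (σ[k_s] ∘ ρ ∘ π ∘ λ) ∘ ⋯ ∘ (σ[k_2] ∘ ρ ∘ π ∘ λ) ∘ σ[k_1] is an even permutation of V. -/
/-!
Every factor of `T_s` is an even permutation of `V`, a set with `2 ^ (r m n)` elements.
An involution `σ` of a finite set `X` has sign `(-1) ^ ((|X| - |Fix σ|) / 2)`, so it is even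
as soon as `4` divides both `|X|` and `|Fix σ|`. In characteristic `2` a translation is a
fixed-point-free involution; the S-box map is a translation composed with the entrywise
involution `x ↦ A x⁻¹`, whose fixed points `0, √A` form an additive subgroup; a transposition
of two coordinates is an involution whose fixed points form an `F`-subspace. In the last two
cases Lagrange's theorem makes the size of the fixed subgroup a power of `2`, hence a multiple
of `4` once it has more than two elements. Since ShiftRows permutes the entries, it is a product
of such transpositions. Finally, `GL_m(F)` is generated by transvections, which are
involutions fixing a subspace, and invertible diagonal matrices, whose order divides the odd
number `2 ^ r - 1`.
-/

/-- The `s`-round function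
`T_s = σ[k_{s+1}] ∘ π ∘ λ ∘ (σ[k_s] ∘ ρ ∘ π ∘ λ) ∘ ⋯ ∘ (σ[k_2] ∘ ρ ∘ π ∘ λ) ∘ σ[k_1]`,
as a permutation (permutation multiplication is function composition). -/
def sRound {V : Type*} [AddGroup V] (rho piP lam : Equiv.Perm V)
    (s : ℕ) (k : ℕ → V) : Equiv.Perm V :=
  Equiv.addRight (k (s + 1)) * piP * lam *
    (List.ofFn fun i : Fin (s - 1) =>
      Equiv.addRight (k (s - i.val)) * rho * piP * lam).prod *
    Equiv.addRight (k 1)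

open Equiv Equiv.Perm Function

theorem four_dvd_of_dvd_two_pow {d N : ℕ} (hd : d ∣ 2 ^ N) (h : 2 < d) : 4 ∣ d := by
  obtain ⟨k, -, rfl⟩ := (Nat.dvd_prime_pow Nat.prime_two).mp hd
  have hk : 2 ≤ k := by
    by_contra! hk
    interval_cases k <;> simp at h
  exact pow_dvd_pow 2 hk

namespace Equiv.Perm

variable {α : Type*} [Fintype α] [DecidableEq α]

theorem sign_eq_one_of_sq_eq_one {σ : Perm α} (hσ : σ ^ 2 = 1) (hα : 4 ∣ Fintype.card α)
    (hfix : 4 ∣ Fintype.card (fixedPoints σ)) : sign σ = 1 := by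
  rw [sign_of_pow_two_eq_one hσ]
  obtain ⟨k, hk⟩ := Nat.dvd_sub hα hfix
  exact Even.neg_one_pow ⟨k, by omega⟩

theorem sign_eq_one_of_pow_eq_one_of_odd {σ : Perm α} {d : ℕ} (hd : Odd d) (hσ : σ ^ d = 1) :
    sign σ = 1 := by
  rw [← pow_one (sign σ), ← Nat.odd_iff.mp hd, ← Int.units_pow_eq_pow_mod_two, ← map_pow, hσ,
    map_one]

end Equiv.Perm

section CharTwo

variable (F : Type*) {V : Type*} [Field F] [Fintype F] [CharP F 2]
  [AddCommGroup V] [Module F V] [Fintype V]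

theorem exists_card_eq_two_pow_mul_finrank :
    ∃ r, 0 < r ∧ Fintype.card V = 2 ^ (r * Module.finrank F V) := by
  obtain ⟨r, -, hF⟩ := FiniteField.card F 2
  exact ⟨r, r.pos, by rw [Module.card_eq_pow_finrank (K := F), hF, pow_mul]⟩

theorem sign_addRight_eq_one [DecidableEq V] (hV : 1 < Module.finrank F V) (v : V) :
    sign (Equiv.addRight v) = 1 := by
  rcases eq_or_ne v 0 with rfl | hv
  · simp
  have hvv : v + v = 0 := by rw [← two_smul F v, CharTwo.two_eq_zero, zero_smul]
  apply sign_eq_one_of_sq_eq_one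
  · ext x
    simp [sq, add_assoc, hvv]
  · obtain ⟨r, hr, hcard⟩ := exists_card_eq_two_pow_mul_finrank F (V := V)
    rw [hcard]
    exact pow_dvd_pow 2 (by nlinarith : 2 ≤ r * Module.finrank F V)
  · rw [Fintype.card_eq_zero_iff.mpr ⟨fun x => hv (by simpa [IsFixedPt] using x.2)⟩]
    exact dvd_zero 4

end CharTwo

theorem sign_eq_one_of_fixedPoints_eq_addSubgroup (F : Type*) {V : Type*} [Field F] [Fintype F]
    [CharP F 2] [AddCommGroup V] [Module F V] [Fintype V] [DecidableEq V]
    {σ : Perm V} (hσ : σ ^ 2 = 1) (S : AddSubgroup V) (hS : ∀ x, σ x = x ↔ x ∈ S)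
    {a b : V} (ha : a ∈ S) (hb : b ∈ S) (ha₀ : a ≠ 0) (hb₀ : b ≠ 0) (hab : a ≠ b) :
    sign σ = 1 := by
  obtain ⟨r, -, hcard⟩ := exists_card_eq_two_pow_mul_finrank F (V := V)
  have hS_dvd : Nat.card S ∣ 2 ^ (r * Module.finrank F V) := by
    rw [← hcard, ← Nat.card_eq_fintype_card]
    exact S.card_addSubgroup_dvd_card
  have hS_three : 2 < Nat.card S := by
    have h3 : ({0, a, b} : Set V).ncard = 3 :=
      Set.ncard_eq_three.mpr ⟨0, a, b, ha₀.symm, hb₀.symm, hab, rfl⟩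
    have hsub : ({0, a, b} : Set V) ⊆ S := by
      simp [Set.insert_subset_iff, ha, hb, S.zero_mem]
    have := Set.ncard_le_ncard hsub
    rw [← SetLike.coe_sort_coe, Nat.card_coe_set_eq]
    omega
  have hS_four := four_dvd_of_dvd_two_pow hS_dvd hS_three
  apply sign_eq_one_of_sq_eq_one hσ
  · exact hcard ▸ hS_four.trans hS_dvd
  · have hfix : fixedPoints σ = (S : Set V) := Set.ext hS
    rw [← Nat.card_eq_fintype_card, hfix]
    exact hS_four

theorem mul_inv_eq_self_iff_of_sq_eq {F : Type*} [Field F] [CharP F 2] {A w : F}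
    (hw : w ^ 2 = A) {x : F} : A * x⁻¹ = x ↔ x = 0 ∨ x = w := by
  rcases eq_or_ne x 0 with rfl | hx
  · simp
  rw [mul_inv_eq_iff_eq_mul₀ hx, ← hw, or_iff_right hx, ← sq, eq_comm]
  exact (frobenius_inj F 2).eq_iff

theorem arrowCongr_refl_mul {I F : Type*} (e₁ e₂ : Perm I) :
    (e₁ * e₂).arrowCongr (Equiv.refl F) =
      e₁.arrowCongr (Equiv.refl F) * e₂.arrowCongr (Equiv.refl F) :=
  rfl

section CoordinatePermutation

variable {F : Type*} [Field F] [Fintype F] [DecidableEq F] [CharP F 2]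

theorem sign_arrowCongr_swap_eq_one {I : Type*} [Fintype I] [DecidableEq I]
    (hI : 2 < Fintype.card I) (x y : I) : sign ((swap x y).arrowCongr (Equiv.refl F)) = 1 := by
  obtain ⟨z, -, hz⟩ := Finset.exists_mem_notMem_of_card_lt_card
    (s := {x, y}) (t := Finset.univ) ((Finset.card_le_two).trans_lt hI)
  simp only [Finset.mem_insert, Finset.mem_singleton, not_or] at hz
  let S := (Pi.evalAddMonoidHom (fun _ : I => F) x).eqLocus (Pi.evalAddMonoidHom _ y)
  refine sign_eq_one_of_fixedPoints_eq_addSubgroup F ?_ S ?_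
    (a := fun _ => 1) (b := Pi.single z 1) rfl ?_ ?_ ?_ ?_
  · rw [sq, ← arrowCongr_refl_mul, swap_mul_self]
    rfl
  · intro g
    show g ∘ swap x y = g ↔ g x = g y
    refine ⟨fun h => by simpa using (congr_fun h x).symm, fun h => funext fun i => ?_⟩
    rw [Function.comp_apply, swap_apply_def]
    split_ifs with hx hy
    · rw [hx, h]
    · rw [hy, h]
    · rfl
  · show (Pi.single z 1 : I → F) x = (Pi.single z 1 : I → F) y
    simp [Ne.symm hz.1, Ne.symm hz.2]
  · exact fun h => one_ne_zero (congr_fun h x : (1 : F) = 0)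
  · exact fun h => one_ne_zero (by simpa using congr_fun h z : (1 : F) = 0)
  · exact fun h => one_ne_zero (by simpa [Ne.symm hz.2] using congr_fun h y : (1 : F) = 0)

theorem sign_arrowCongr_eq_one {I : Type*} [Fintype I] [DecidableEq I] (hI : 2 < Fintype.card I)
    (e : Perm I) : sign (e.arrowCongr (Equiv.refl F)) = 1 := by
  induction e using Perm.swap_induction_on with
  | one => exact sign_one
  | swap_mul f x y hxy ih =>
    rw [arrowCongr_refl_mul, Perm.sign_mul, ih, sign_arrowCongr_swap_eq_one hI x y, mul_one]

theorem sign_eq_one_of_permutes_entries {m n : Type*} [Fintype m] [Fintype n] [DecidableEq m]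
    [DecidableEq n] (hmn : 2 < Fintype.card (m × n)) (e : Perm (m × n))
    (σ : Perm (Matrix m n F)) (hσ : ∀ a i j, σ a i j = a (e (i, j)).1 (e (i, j)).2) :
    sign σ = 1 := by
  rw [sign_eq_sign_of_equiv σ (e.symm.arrowCongr (Equiv.refl F)) (Equiv.curry m n F).symm
    fun a => funext fun p => hσ a p.1 p.2]
  exact sign_arrowCongr_eq_one hmn e.symm

end CoordinatePermutation

section Matrix

variable {m n F : Type*} [Fintype m] [Fintype n] [DecidableEq m] [DecidableEq n]
  [Field F] [Fintype F] [DecidableEq F] [CharP F 2]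

theorem sign_eq_one_of_apply_eq_mul_inv_add (hmn : 1 < Fintype.card (m × n)) {A : F}
    (hA : A ≠ 0) (B : F) (lam : Perm (Matrix m n F))
    (hlam : ∀ a i j, lam a i j = A * (a i j)⁻¹ + B) : sign lam = 1 := by
  obtain ⟨w, hw⟩ : ∃ w, w ^ 2 = A := by
    obtain ⟨w, hw⟩ := isSquare_of_charTwo' A
    exact ⟨w, by rw [sq, hw]⟩
  have hw₀ : w ≠ 0 := by
    rintro rfl
    exact hA (by simp [← hw])
  have hinv : Involutive fun a : Matrix m n F => a.map (A * ·⁻¹) := fun a => by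
    ext i j
    simp only [Matrix.map_apply, mul_inv_rev, inv_inv]
    field_simp
  have hlam_eq : lam = Equiv.addRight (Matrix.of fun _ _ => B) * hinv.toPerm := by
    ext a i j
    simp [hlam]
  have hfinrank : 1 < Module.finrank F (Matrix m n F) := by
    simpa [Module.finrank_matrix] using hmn
  rw [hlam_eq, Perm.sign_mul, sign_addRight_eq_one F hfinrank, one_mul]
  let S : AddSubgroup (Matrix m n F) :=
    { carrier := {a | ∀ i j, a i j = 0 ∨ a i j = w}
      zero_mem' := fun _ _ => Or.inl rfl
      add_mem' := fun {x y} hx hy i j => by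
        rcases hx i j with h | h <;> rcases hy i j with h' | h' <;>
          simp [h, h', CharTwo.add_self_eq_zero]
      neg_mem' := fun {x} hx i j => by simpa [CharTwo.neg_eq] using hx i j }
  have hsingle (i : m) (j : n) : Matrix.single i j w ∈ S := fun i₀ j₀ => by
    rw [Matrix.single_apply]
    split_ifs <;> simp
  obtain ⟨⟨i, j⟩, ⟨i', j'⟩, hne⟩ := Fintype.exists_pair_of_one_lt_card hmn
  refine sign_eq_one_of_fixedPoints_eq_addSubgroup F (σ := hinv.toPerm) ?_ S ?_
    (hsingle i j) (hsingle i' j') ?_ ?_ ?_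
  · rw [sq]
    exact Equiv.ext hinv
  · intro a
    simp only [Involutive.coe_toPerm, ← Matrix.ext_iff, Matrix.map_apply,
      mul_inv_eq_self_iff_of_sq_eq hw]
    rfl
  · exact fun h => hw₀ (by simpa using congr_fun₂ h i j)
  · exact fun h => hw₀ (by simpa using congr_fun₂ h i' j')
  · intro h
    have := congr_fun₂ h i j
    simp only [Matrix.single_apply, true_and, if_true] at this
    split_ifs at this with h'
    · exact hne (by rw [h'.1, h'.2])
    · exact hw₀ this

def mulLeftPerm (m n R : Type*) [Fintype m] [DecidableEq m] [CommRing R] :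
    (Matrix m m R)ˣ →* Perm (Matrix m n R) where
  toFun u :=
    { toFun := (u.val * ·)
      invFun := (u⁻¹.val * ·)
      left_inv := fun a => by simp [← Matrix.mul_assoc]
      right_inv := fun a => by simp [← Matrix.mul_assoc] }
  map_one' := by ext; simp
  map_mul' u v := by ext; simp [Matrix.mul_assoc]

theorem sign_mulLeftPerm_eq_one_of_val_eq_transvection (hn : 1 < Fintype.card n)
    (t : Matrix.TransvectionStruct m F) {u : (Matrix m m F)ˣ} (hu : u.val = t.toMatrix) :
    sign (mulLeftPerm m n F u) = 1 := by
  have hfix (y : n) : t.toMatrix * Matrix.single t.i y (1 : F) = Matrix.single t.i y 1 := by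
    simp [Matrix.TransvectionStruct.toMatrix, Matrix.transvection, Matrix.add_mul, t.hij.symm]
  let S : AddSubgroup (Matrix m n F) :=
    { carrier := {a | t.toMatrix * a = a}
      zero_mem' := Matrix.mul_zero _
      add_mem' := fun {a b} ha hb => by simp_all [Matrix.mul_add]
      neg_mem' := fun {a} ha => by simp_all [Matrix.mul_neg] }
  obtain ⟨y, y', hy⟩ := Fintype.exists_pair_of_one_lt_card hn
  refine sign_eq_one_of_fixedPoints_eq_addSubgroup F ?_ S (fun a => by simp [mulLeftPerm, hu, S])
    (hfix y) (hfix y') ?_ ?_ ?_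
  · rw [← map_pow, show u ^ 2 = 1 from Units.ext ?_, map_one]
    rw [Units.val_pow_eq_pow_val, hu, sq, Matrix.TransvectionStruct.toMatrix,
      Matrix.transvection_mul_transvection_same _ _ t.hij, CharTwo.add_self_eq_zero,
      Matrix.transvection_zero, Units.val_one]
  · exact fun h => one_ne_zero (by simpa using congr_fun₂ h t.i y : (1 : F) = 0)
  · exact fun h => one_ne_zero (by simpa using congr_fun₂ h t.i y' : (1 : F) = 0)
  · refine fun h => one_ne_zero (?_ : (1 : F) = 0)
    simpa [Matrix.single_apply, hy.symm] using congr_fun₂ h t.i y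

theorem sign_mulLeftPerm_eq_one_of_val_eq_diagonal (D : m → F) {u : (Matrix m m F)ˣ}
    (hu : u.val = Matrix.diagonal D) : sign (mulLeftPerm m n F u) = 1 := by
  have hD : ∀ i, D i ≠ 0 := by
    have := ((Matrix.isUnit_iff_isUnit_det _).mp u.isUnit).ne_zero
    rw [hu, Matrix.det_diagonal] at this
    exact fun i => (Finset.prod_ne_zero_iff.mp this) i (Finset.mem_univ i)
  have hodd : Odd (Fintype.card F - 1) := by
    have h2 : 2 ∣ Fintype.card F :=
      (CharP.cast_eq_zero_iff F 2 _).mp (FiniteField.cast_card_eq_zero F)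
    exact Nat.Even.sub_odd Fintype.one_lt_card.le (even_iff_two_dvd.mpr h2) odd_one
  refine sign_eq_one_of_pow_eq_one_of_odd hodd ?_
  rw [← map_pow, show u ^ (Fintype.card F - 1) = 1 from Units.ext ?_, map_one]
  rw [Units.val_pow_eq_pow_val, hu, Matrix.diagonal_pow, Units.val_one, ← Matrix.diagonal_one]
  congr 1
  funext i
  exact FiniteField.pow_card_sub_one_eq_one _ (hD i)

theorem sign_mulLeftPerm_eq_one (hn : 1 < Fintype.card n) (u : (Matrix m m F)ˣ) :
    sign (mulLeftPerm m n F u) = 1 := by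
  refine Matrix.diagonal_transvection_induction_of_det_ne_zero
    (fun M => ∀ u : (Matrix m m F)ˣ, u.val = M → sign (mulLeftPerm m n F u) = 1) u.val
    ((Matrix.isUnit_iff_isUnit_det _).mp u.isUnit).ne_zero
    (fun D _ _ => sign_mulLeftPerm_eq_one_of_val_eq_diagonal D)
    (fun t _ => sign_mulLeftPerm_eq_one_of_val_eq_transvection hn t) ?_ u rfl
  intro A B hA hB hPA hPB u hu
  have hA' := (Matrix.isUnit_iff_isUnit_det A).mpr (isUnit_iff_ne_zero.mpr hA)
  have hB' := (Matrix.isUnit_iff_isUnit_det B).mpr (isUnit_iff_ne_zero.mpr hB)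
  rw [show u = hA'.unit * hB'.unit from Units.ext (by simp [hu]), map_mul, Perm.sign_mul,
    hPA _ hA'.unit_spec, hPB _ hB'.unit_spec, mul_one]

end Matrix

theorem stmt_11_general (r m n : ℕ) (hm : 1 ≤ m) (hn : 2 < n)
    (F : Type*) [Field F] [Fintype F] [DecidableEq F] (hF : Fintype.card F = 2 ^ r)
    (A B : F) (hA : A ≠ 0) (c : Fin m → Fin n)
    (C : Matrix (Fin m) (Fin m) F) (hC : IsUnit C)
    (lam piP rho : Equiv.Perm (Matrix (Fin m) (Fin n) F))
    (hlam : ∀ (a : Matrix (Fin m) (Fin n) F) (i : Fin m) (j : Fin n),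
      lam a i j = A * (a i j)⁻¹ + B)
    (hpi : ∀ (a : Matrix (Fin m) (Fin n) F) (i : Fin m) (j : Fin n),
      piP a i j = a i (j - c i))
    (hrho : ∀ a : Matrix (Fin m) (Fin n) F, rho a = C * a)
    (s : ℕ) (k : ℕ → Matrix (Fin m) (Fin n) F) :
    Equiv.Perm.sign (sRound rho piP lam s k) = 1 := by
  have : CharP F 2 := charP_of_card_eq_prime_pow hF
  have hmn : 2 < Fintype.card (Fin m × Fin n) := by
    rw [Fintype.card_prod, Fintype.card_fin, Fintype.card_fin]
    nlinarith
  have hσ (v : Matrix (Fin m) (Fin n) F) : sign (Equiv.addRight v) = 1 :=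
    sign_addRight_eq_one F (by simpa [Module.finrank_matrix] using one_lt_two.trans hmn) v
  have hlam' := sign_eq_one_of_apply_eq_mul_inv_add (one_lt_two.trans hmn) hA B lam hlam
  have : NeZero n := ⟨by omega⟩
  have hpi' := sign_eq_one_of_permutes_entries hmn
    ((Equiv.refl _).prodShear fun i => Equiv.subRight (c i)) piP hpi
  have hrho' : sign rho = 1 := by
    rw [show rho = mulLeftPerm _ _ F hC.unit from Equiv.ext fun a => by simp [hrho, mulLeftPerm]]
    exact sign_mulLeftPerm_eq_one (by simp; omega) _
  simp [sRound, map_list_prod, Function.comp_def, hσ, hlam', hpi', hrho']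

/-- For `n > 2`, every `s`-round Rijndael-like function on `M_{m,n}(GF(2^r))` is an even
permutation. -/
theorem stmt_11 (r m n : ℕ) (hr : 1 ≤ r) (hm : 1 ≤ m) (hn : 2 < n)
    (F : Type*) [Field F] [Fintype F] [DecidableEq F] (hF : Fintype.card F = 2 ^ r)
    (A B : F) (hA : A ≠ 0) (c : Fin m → Fin n)
    (C : Matrix (Fin m) (Fin m) F) (hC : IsUnit C)
    (lam piP rho : Equiv.Perm (Matrix (Fin m) (Fin n) F))
    (hlam : ∀ (a : Matrix (Fin m) (Fin n) F) (i : Fin m) (j : Fin n),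
      lam a i j = A * (a i j)⁻¹ + B)
    (hpi : ∀ (a : Matrix (Fin m) (Fin n) F) (i : Fin m) (j : Fin n),
      piP a i j = a i (j - c i))
    (hrho : ∀ a : Matrix (Fin m) (Fin n) F, rho a = C * a)
    (s : ℕ) (hs : 1 < s) (k : ℕ → Matrix (Fin m) (Fin n) F) :
    Equiv.Perm.sign (sRound rho piP lam s k) = 1 :=
  stmt_11_general r m n hm hn F hF A B hA c C hC lam piP rho hlam hpi hrho s k
end

section
/- Let p > 2 be a prime, r, m, n ≥ 1, F = GF(p^r), and V = M_{m,n}(F). Suppose either (i) s is even and ρ is an odd permutation, or (ii) s is odd and at least one of π, λ is an odd permutation. Then for every choice of subkeys k_1, …, k_{s+1} ∈ V, the s-round generalized Rijndael-like function T_s = σ[k_{s+1}] ∘ π ∘ λ ∘ (σ[k_s] ∘ ρ ∘ π ∘ λ) ∘ ⋯ ∘ (σ[k_2] ∘ ρ ∘ π ∘ λ) ∘ σ[k_1] is an odd permutation of V. -/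
open Equiv Equiv.Perm Fintype

namespace Equiv.Perm

variable {α : Type*} [Fintype α] [DecidableEq α]

theorem sign_eq_one_of_pow_eq_one {σ : Perm α} {t : ℕ} (ht : Odd t) (h : σ ^ t = 1) :
    sign σ = 1 := by
  have h_sign := congrArg sign h
  rwa [map_pow, map_one, Int.units_pow_eq_pow_mod_two, Nat.odd_iff.mp ht, pow_one] at h_sign

theorem sign_addRight_of_odd_card {G : Type*} [AddGroup G] [Fintype G] [DecidableEq G]
    (hG : Odd (card G)) (g : G) : sign (Equiv.addRight g) = 1 := by
  refine sign_eq_one_of_pow_eq_one hG ?_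
  have h_pow : ∀ t : ℕ, Equiv.addRight g ^ t = Equiv.addRight (t • g) := by
    intro t; ext x; simp
  rw [h_pow, card_nsmul_eq_zero, Equiv.addRight_zero]

theorem sign_prodCongr_self (τ : Perm α) : sign (prodCongr τ τ) = 1 := by
  have h_split : prodCongr τ τ = prodCongrRight (fun _ => τ) * prodCongrLeft (fun _ => τ) := by
    ext ⟨a, b⟩ <;> rfl
  rw [h_split, map_mul, sign_prodCongrRight, sign_prodCongrLeft, Int.units_mul_self]

variable {ι κ F : Type*} [Fintype ι] [DecidableEq ι] [Fintype κ] [DecidableEq κ]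
  [Fintype F] [DecidableEq F]

theorem sign_piCongrRight_const_of_equiv_sum (e : ι ≃ κ ⊕ κ) (σ : Perm F) :
    sign (piCongrRight fun _ : ι => σ : Perm (ι → F)) = 1 := by
  let E := (arrowCongr e (Equiv.refl F)).trans (sumArrowEquivProdArrow κ κ F)
  have h_conj : E.permCongr (piCongrRight fun _ : ι => σ) =
      prodCongr (piCongrRight fun _ : κ => σ) (piCongrRight fun _ : κ => σ) := by
    ext f x <;> simp [E, permCongr_apply, arrowCongr] <;> rfl
  rw [← sign_permCongr E, h_conj, sign_prodCongr_self]

theorem sign_piCongrRight_const_of_even_card (hι : Even (card ι)) (σ : Perm F) :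
    sign (piCongrRight fun _ : ι => σ : Perm (ι → F)) = 1 := by
  obtain ⟨h, hh⟩ := hι
  exact sign_piCongrRight_const_of_equiv_sum
    ((equivFin ι).trans ((finCongr hh).trans finSumFinEquiv.symm)) σ

theorem sign_eq_one_of_apply_eq_entrywise (hκ : Even (card κ)) (σ : Perm F)
    {lam : Perm (Matrix ι κ F)} (h : ∀ a i j, lam a i j = σ (a i j)) : sign lam = 1 := by
  have h_conj : (curry ι κ F).symm.permCongr lam = piCongrRight fun _ => σ := by
    ext a ⟨i, j⟩
    exact h _ i j
  refine (sign_permCongr (curry ι κ F).symm lam).symm.trans ?_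
  rw [h_conj]
  exact sign_piCongrRight_const_of_even_card (by rw [card_prod]; exact hκ.mul_left _) σ

end Equiv.Perm

theorem pow_card_eq_one_of_apply_eq_sub {ι G F : Type*} [AddCommGroup G] [Fintype G]
    (c : ι → G) {π : Perm (ι → G → F)} (hπ : ∀ a i j, π a i j = a i (j - c i)) :
    π ^ card G = 1 := by
  have h_pow : ∀ (t : ℕ) a i j, (π ^ t) a i j = a i (j - t • c i) := by
    intro t
    induction t with
    | zero => simp
    | succ t ih => intro a i j; rw [pow_succ', mul_apply, hπ, ih, sub_sub, succ_nsmul']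
  ext a i j
  rw [h_pow, card_nsmul_eq_zero, sub_zero]
  rfl

theorem odd_card_matrix {ι κ F : Type*} [Fintype ι] [DecidableEq ι] [Fintype κ]
    [DecidableEq κ] [Fintype F] (hF : Odd (card F)) : Odd (card (Matrix ι κ F)) := by
  rw [card_eq_nat_card]
  simpa [Matrix] using hF.pow.pow

theorem sign_sRound {V : Type*} [AddGroup V] [Fintype V] [DecidableEq V] (hV : Odd (card V))
    (rho piP lam : Perm V) (s : ℕ) (k : ℕ → V) :
    sign (sRound rho piP lam s k) =
      sign piP * sign lam * (sign rho * sign piP * sign lam) ^ (s - 1) := by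
  simp [sRound, sign_addRight_of_odd_card hV, MonoidHom.map_list_prod, List.map_ofFn,
    Function.comp_def, List.ofFn_const, List.prod_replicate, mul_assoc]

theorem stmt_12_general (p r m n : ℕ) (hp : p.Prime) (hp2 : 2 < p)
    (F : Type*) [Field F] [Fintype F] [DecidableEq F] (hF : Fintype.card F = p ^ r)
    (A B : F) (hA : A ≠ 0) (c : Fin m → Fin n)
    (lam piP rho : Equiv.Perm (Matrix (Fin m) (Fin n) F))
    (hlam : ∀ (a : Matrix (Fin m) (Fin n) F) (i : Fin m) (j : Fin n),
      lam a i j = A * (a i j)⁻¹ + B)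
    (hpi : ∀ (a : Matrix (Fin m) (Fin n) F) (i : Fin m) (j : Fin n),
      piP a i j = a i (j - c i))
    (s : ℕ) (hs : 1 < s)
    (hcond : (Even s ∧ Equiv.Perm.sign rho = -1) ∨
      (Odd s ∧ (Equiv.Perm.sign piP = -1 ∨ Equiv.Perm.sign lam = -1)))
    (k : ℕ → Matrix (Fin m) (Fin n) F) :
    Equiv.Perm.sign (sRound rho piP lam s k) = -1 := by
  have hF_odd : Odd (card F) := hF ▸ (hp.odd_of_ne_two hp2.ne').pow
  rw [sign_sRound (odd_card_matrix hF_odd)]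
  rcases hcond with ⟨hs_even, hrho_odd⟩ | ⟨hs_odd, hpi_or_lam⟩
  · rw [Int.units_pow_eq_pow_mod_two, Nat.odd_iff.mp (Nat.Even.sub_odd hs.le hs_even odd_one),
      pow_one, hrho_odd]
    generalize sign piP = u, sign lam = v
    revert u v
    decide
  · rw [Int.units_pow_eq_pow_mod_two, Nat.even_iff.mp (Nat.Odd.sub_odd hs_odd odd_one),
      pow_zero, mul_one]
    rcases n.even_or_odd with hn_even | hn_odd
    · let sBox : Perm F := (Equiv.inv F).trans ((Equiv.mulLeft₀ A hA).trans (Equiv.addRight B))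
      have hlam_even : sign lam = 1 :=
        sign_eq_one_of_apply_eq_entrywise (by rwa [card_fin]) sBox fun a i j => hlam a i j
      rw [hlam_even, mul_one]
      simpa [hlam_even] using hpi_or_lam
    · have : NeZero n := ⟨hn_odd.pos.ne'⟩
      have hpi_even : sign piP = 1 :=
        sign_eq_one_of_pow_eq_one (by rwa [card_fin]) (pow_card_eq_one_of_apply_eq_sub c hpi)
      rw [hpi_even, one_mul]
      simpa [hpi_even] using hpi_or_lam

/-- For `p > 2`, if either (`s` is even and `ρ` is odd) or (`s` is odd and `π` or `λ` is
odd), then every `s`-round generalized Rijndael-like function on `M_{m,n}(GF(p^r))` is an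
odd permutation. -/
theorem stmt_12 (p r m n : ℕ) (hp : p.Prime) (hp2 : 2 < p)
    (hr : 1 ≤ r) (hm : 1 ≤ m) (hn : 1 ≤ n)
    (F : Type*) [Field F] [Fintype F] [DecidableEq F] (hF : Fintype.card F = p ^ r)
    (A B : F) (hA : A ≠ 0) (c : Fin m → Fin n)
    (C : Matrix (Fin m) (Fin m) F) (hC : IsUnit C)
    (lam piP rho : Equiv.Perm (Matrix (Fin m) (Fin n) F))
    (hlam : ∀ (a : Matrix (Fin m) (Fin n) F) (i : Fin m) (j : Fin n),
      lam a i j = A * (a i j)⁻¹ + B)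
    (hpi : ∀ (a : Matrix (Fin m) (Fin n) F) (i : Fin m) (j : Fin n),
      piP a i j = a i (j - c i))
    (hrho : ∀ a : Matrix (Fin m) (Fin n) F, rho a = C * a)
    (s : ℕ) (hs : 1 < s)
    (hcond : (Even s ∧ Equiv.Perm.sign rho = -1) ∨
      (Odd s ∧ (Equiv.Perm.sign piP = -1 ∨ Equiv.Perm.sign lam = -1)))
    (k : ℕ → Matrix (Fin m) (Fin n) F) :
    Equiv.Perm.sign (sRound rho piP lam s k) = -1 :=
  stmt_12_general p r m n hp hp2 F hF A B hA c lam piP rho hlam hpi s hs hcond k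
end

section
/- Let p be a prime, r > 4, and F = GF(p^r). Let γ : F → F be the map with γ(0) = 0 and γ(x) = x^{-1} for x ≠ 0. Then for every nonzero v ∈ F, the image of the map F → F, x ↦ γ(x + v) − γ(x), has cardinality greater than p^{r−2}. -/
/-!
Off the two poles `0` and `-v`, `(x + v)⁻¹ - x⁻¹ = -v / (x (x + v))`, and `x (x + v)` is invariant
only under the reflection `x ↦ -v - x`. So the map is at most two-to-one on the `q - 2` points
away from its poles, its image has at least `q / 2 - 1` elements, and `q / 2 - 1 > q / p²` as
soon as `q / p² ≥ 2`.
-/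

section InvAddSubInv

variable {F : Type*} [Field F] {v : F}

theorem eq_or_eq_neg_sub_of_inv_add_sub_inv_eq (hv : v ≠ 0) {x y : F} (hx : x ≠ 0)
    (hxv : x + v ≠ 0) (hy : y ≠ 0) (hyv : y + v ≠ 0)
    (h : (x + v)⁻¹ - x⁻¹ = (y + v)⁻¹ - y⁻¹) : y = x ∨ y = -v - x := by
  have hfactor : (x - y) * (x + y + v) = 0 := by
    field_simp at h
    have : v * ((x - y) * (x + y + v)) = 0 := by linear_combination h
    exact (mul_eq_zero.1 this).resolve_left hv
  rcases mul_eq_zero.1 hfactor with h | h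
  · exact Or.inl (by linear_combination -h)
  · exact Or.inr (by linear_combination h)

theorem card_le_two_mul_ncard_range_inv_add_sub_inv [Fintype F] (hv : v ≠ 0) :
    Fintype.card F ≤ 2 * (Set.range fun x : F => (x + v)⁻¹ - x⁻¹).ncard + 2 := by
  classical
  set f : F → F := fun x => (x + v)⁻¹ - x⁻¹
  set S : Finset F := ({0, -v} : Finset F)ᶜ
  have hS : Fintype.card F ≤ S.card + 2 := by
    have := Finset.card_le_two (a := (0 : F)) (b := -v)
    rw [Finset.card_compl]
    omega
  have mem_S {x : F} (hx : x ∈ S) : x ≠ 0 ∧ x + v ≠ 0 := by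
    simp only [S, Finset.mem_compl, Finset.mem_insert, Finset.mem_singleton, not_or] at hx
    exact ⟨hx.1, fun h => hx.2 (eq_neg_of_add_eq_zero_left h)⟩
  have hfiber : ∀ c ∈ S.image f, (S.filter fun x => f x = c).card ≤ 2 := by
    intro c hc
    obtain ⟨x, hxS, rfl⟩ := Finset.mem_image.1 hc
    refine (Finset.card_le_card (t := {x, -v - x}) fun y hy => ?_).trans Finset.card_le_two
    obtain ⟨hyS, hfy⟩ := Finset.mem_filter.1 hy
    rcases eq_or_eq_neg_sub_of_inv_add_sub_inv_eq hv (mem_S hxS).1 (mem_S hxS).2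
      (mem_S hyS).1 (mem_S hyS).2 hfy.symm with rfl | rfl <;> simp
  have himage : (S.image f).card ≤ (Set.range f).ncard := by
    rw [Set.ncard_eq_toFinset_card']
    exact Finset.card_le_card fun c hc => by
      obtain ⟨x, -, rfl⟩ := Finset.mem_image.1 hc
      simp
  have := S.card_le_mul_card_image 2 hfiber
  omega

end InvAddSubInv

theorem Nat.pow_sub_two_lt_of_pow_le_two_mul_add_two {p r n : ℕ} (hp : 2 ≤ p) (hr : 2 < r)
    (h : p ^ r ≤ 2 * n + 2) : p ^ (r - 2) < n := by
  have hsplit : p ^ r = p ^ (r - 2) * p ^ 2 := by rw [← pow_add, Nat.sub_add_cancel hr.le]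
  have hp2 : 4 ≤ p ^ 2 := by nlinarith
  have hbase : 2 ≤ p ^ (r - 2) :=
    hp.trans (Nat.le_self_pow (by omega) p)
  have : p ^ (r - 2) * 4 ≤ p ^ r := hsplit ▸ Nat.mul_le_mul_left _ hp2
  omega

/-- For `F = GF(p^r)` with `r > 4` and `γ` the inversion-with-zero map, for every nonzero
`v ∈ F` the image of `x ↦ γ(x + v) - γ(x)` has more than `p^{r-2}` elements. -/
theorem stmt_14 (p r : ℕ) (hp : p.Prime) (hr : 4 < r)
    (F : Type*) [Field F] [Fintype F] (hF : Fintype.card F = p ^ r)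
    (v : F) (hv : v ≠ 0) :
    p ^ (r - 2) < Set.ncard (Set.range fun x : F => (x + v)⁻¹ - x⁻¹) :=
  Nat.pow_sub_two_lt_of_pow_le_two_mul_add_two hp.two_le (by omega)
    (hF ▸ card_le_two_mul_ncard_range_inv_add_sub_inv hv)
end

section
/- Let p be a prime, r > 4, m, n ≥ 1, F = GF(p^r), and V = M_{m,n}(F). Let α = ρ ∘ π and assume that the only F-linear subspaces W of V with α(W) = W are {0} and V. Then the group G_τ of permutations of V generated by the set τ = { T[k] : k ∈ V } of all generalized Rijndael-like round functions T[k] = σ[k] ∘ ρ ∘ π ∘ λ acts primitively on V (its natural action on V is transitive and admits no non-trivial blocks). -/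
/-!
The quotients `T[k] * T[0]⁻¹ = σ[k]` lie in `G_τ`, so `G_τ` is transitive and a block `Bl`
through `b` is `b + U` for the subgroup `U` of translations stabilising it; every element of
`G_τ`, in particular `γ = ρ ∘ π ∘ λ`, maps cosets of `U` onto cosets of `U`. As `α = ρ ∘ π` is
linear, entrywise inversion maps cosets of `U` onto cosets of `U' = (A • α)⁻¹ U`.

On a coordinate axis where some `u ∈ U` has entry `t ≠ 0`, this says that inversion exchanges the
additive subgroups `K` and `H` of `F` cut out by `U` and `U'`, and that `y ↦ (y + t)⁻¹ - y⁻¹`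
takes values in one coset of `H`. Its fibres have at most two points, so `[F : H] ≤ 2`. Index two
forces characteristic two; then `k ^ 2 * H ⊆ K` for `k ∈ K`, and the squares `(k / g) ^ 2` give
`|F| / 2 - 1` units stabilising `H`, too many for a proper subgroup of `Fˣ`, whose order `|F| - 1`
is odd. So every axis met by `U` lies in `U` and `U'`; hence `U = U'` is an `α`-invariant
subspace, i.e. `0` or `V`.
-/

open Pointwise

theorem eq_or_eq_neg_sub_of_inv_add_sub_inv_eq_s17 {F : Type*} [Field F] {t y y' : F} (ht : t ≠ 0)
    (hy : y ≠ 0) (hyt : y + t ≠ 0) (hy' : y' ≠ 0) (hyt' : y' + t ≠ 0)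
    (h : (y' + t)⁻¹ - y'⁻¹ = (y + t)⁻¹ - y⁻¹) : y' = y ∨ y' = -t - y := by
  rw [inv_sub_inv hyt' hy', inv_sub_inv hyt hy, div_eq_div_iff (mul_ne_zero hyt' hy')
    (mul_ne_zero hyt hy)] at h
  have : t * ((y' - y) * (y' - (-t - y))) = 0 := by linear_combination h
  rcases mul_eq_zero.1 ((mul_eq_zero.1 this).resolve_left ht) with h | h
  · exact .inl (sub_eq_zero.1 h)
  · exact .inr (sub_eq_zero.1 h)

theorem card_le_two_mul_card_add_two {F : Type*} [Field F] [Fintype F] {H : AddSubgroup F}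
    {t c : F} (ht : t ≠ 0) (hH : ∀ y, (y + t)⁻¹ - y⁻¹ - c ∈ H) :
    Fintype.card F ≤ 2 * Nat.card H + 2 := by
  classical
  set f : F → F := fun y => (y + t)⁻¹ - y⁻¹ - c
  set s := (Finset.univ.erase (0 : F)).erase (-t)
  have hmem : ∀ {y}, y ∈ s ↔ y ≠ 0 ∧ y + t ≠ 0 := by
    intro y
    simp [s, and_comm, ← sub_eq_zero (a := y) (b := -t)]
  have hs : s.card + 2 = Fintype.card F := by
    rw [Finset.card_erase_of_mem (by simpa using ht), Finset.card_erase_of_mem (by simp),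
      Finset.card_univ]
    have := Fintype.one_lt_card (α := F)
    omega
  have hfib : ∀ b ∈ s.image f, (s.filter (f · = b)).card ≤ 2 := by
    intro b hb
    obtain ⟨y, hy, rfl⟩ := Finset.mem_image.1 hb
    refine (Finset.card_le_card fun y' hy' => ?_).trans
      (Finset.card_le_two (a := y) (b := -t - y))
    obtain ⟨hy', hfy'⟩ := Finset.mem_filter.1 hy'
    simpa using eq_or_eq_neg_sub_of_inv_add_sub_inv_eq_s17 ht (hmem.1 hy).1 (hmem.1 hy).2
      (hmem.1 hy').1 (hmem.1 hy').2 (sub_left_injective hfy')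
  have himg : (s.image f).card ≤ Nat.card H := by
    rw [← Set.ncard_coe_finset, ← SetLike.coe_sort_coe, Nat.card_coe_set_eq]
    refine Set.ncard_le_ncard ?_
    simp only [Finset.coe_image, Set.image_subset_iff]
    exact fun y _ => hH y
  have := Finset.card_le_mul_card_image s 2 hfib
  omega

namespace AddSubgroup

theorem index_eq_two_of_card_le {G : Type*} [AddGroup G] [Finite G] {H : AddSubgroup G}
    (hH : H ≠ ⊤) (hG : 6 < Nat.card G) (hle : Nat.card G ≤ 2 * Nat.card H + 2) :
    H.index = 2 := by
  have hmul := H.card_mul_index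
  have hlt := one_lt_index_of_ne_top hH
  by_contra hne
  have h3 : 3 * Nat.card H ≤ Nat.card H * H.index := by
    rw [mul_comm]; exact Nat.mul_le_mul_left _ (by omega)
  have : Nat.card H ≤ 2 := by omega
  nlinarith

end AddSubgroup

section InvPair

variable {F : Type*} [Field F] {K H : AddSubgroup F}

theorem sq_mul_mem_of_inv_mem (hKH : ∀ k ∈ K, k⁻¹ ∈ H) (hHK : ∀ h ∈ H, h⁻¹ ∈ K)
    {k h : F} (hk : k ∈ K) (hh : h ∈ H) : k ^ 2 * h ∈ K := by
  rcases eq_or_ne k 0 with rfl | hk0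
  · simp
  rcases eq_or_ne h 0 with rfl | hh0
  · simp
  rcases eq_or_ne (k + h⁻¹) 0 with hs | hs
  · have : k ^ 2 * h = -k := by
      rw [show h = -k⁻¹ by rw [← inv_inv h, eq_neg_of_add_eq_zero_right hs, inv_neg]]
      field_simp
    rw [this]
    exact K.neg_mem hk
  have hid : k ^ 2 * h = (k⁻¹ - (k + h⁻¹)⁻¹)⁻¹ - k := by
    rw [inv_sub_inv hk0 hs]
    field_simp
    ring
  rw [hid]
  exact K.sub_mem (hHK _ (H.sub_mem (hKH _ hk) (hKH _ (K.add_mem hk (hHK _ hh))))) hk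

theorem card_eq_of_inv_mem [Finite F] (hKH : ∀ k ∈ K, k⁻¹ ∈ H) (hHK : ∀ h ∈ H, h⁻¹ ∈ K) :
    Nat.card K = Nat.card H :=
  le_antisymm
    (Nat.card_le_card_of_injective (fun k : K => (⟨k⁻¹, hKH k k.2⟩ : H))
      fun _ _ hab => Subtype.ext (inv_injective (congrArg Subtype.val hab)))
    (Nat.card_le_card_of_injective (fun h : H => (⟨h⁻¹, hHK h h.2⟩ : K))
      fun _ _ hab => Subtype.ext (inv_injective (congrArg Subtype.val hab)))

theorem exists_sq_mul_eq_of_inv_mem [Finite F] (hKH : ∀ k ∈ K, k⁻¹ ∈ H)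
    (hHK : ∀ h ∈ H, h⁻¹ ∈ K) {g : F} (hg : g ∈ K) (hg0 : g ≠ 0) {x : F} (hx : x ∈ K) :
    ∃ h ∈ H, g ^ 2 * h = x := by
  have hinj : Function.Injective
      fun h : H => (⟨g ^ 2 * h, sq_mul_mem_of_inv_mem hKH hHK hg h.2⟩ : K) :=
    fun _ _ hab => Subtype.ext (mul_left_cancel₀ (pow_ne_zero 2 hg0) (congrArg Subtype.val hab))
  obtain ⟨h, hh⟩ := (hinj.bijective_of_nat_card_le (card_eq_of_inv_mem hKH hHK).le).2 ⟨x, hx⟩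
  exact ⟨h, h.2, congrArg Subtype.val hh⟩

theorem sq_div_mem_stabilizer [Finite F] (hKH : ∀ k ∈ K, k⁻¹ ∈ H) (hHK : ∀ h ∈ H, h⁻¹ ∈ K)
    {g k : F} (hg : g ∈ K) (hg0 : g ≠ 0) (hk : k ∈ K) (hk0 : k ≠ 0) :
    Units.mk0 ((k / g) ^ 2) (pow_ne_zero 2 (div_ne_zero hk0 hg0)) ∈
      MulAction.stabilizer Fˣ (H : Set F) := by
  rw [MulAction.mem_stabilizer_iff]
  refine Set.eq_of_subset_of_ncard_le (Set.smul_set_subset_iff.2 fun x hx => ?_)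
    (Set.ncard_smul_set _ _).ge (Set.toFinite _)
  obtain ⟨h, hh, hgh⟩ :=
    exists_sq_mul_eq_of_inv_mem hKH hHK hg hg0 (sq_mul_mem_of_inv_mem hKH hHK hk hx)
  have : (k / g) ^ 2 * x = h := by
    field_simp
    rw [hgh]
  simpa [Units.smul_def, this] using hh

end InvPair

theorem AddSubgroup.eq_top_of_stabilizer_eq_top {F : Type*} [Field F] {H : AddSubgroup F}
    (hH : H ≠ ⊥) (hM : MulAction.stabilizer Fˣ (H : Set F) = ⊤) : H = ⊤ := by
  obtain ⟨⟨h₀, hh₀⟩, hh₀0⟩ := AddSubgroup.ne_bot_iff_exists_ne_zero.1 hH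
  have hh₀0 : h₀ ≠ 0 := fun h => hh₀0 (Subtype.ext h)
  refine (AddSubgroup.eq_top_iff' H).2 fun y => ?_
  rcases eq_or_ne y 0 with rfl | hy
  · exact H.zero_mem
  set u := Units.mk0 (y / h₀) (div_ne_zero hy hh₀0)
  have hu : u • (H : Set F) = H := MulAction.mem_stabilizer_iff.1 (hM ▸ Subgroup.mem_top u)
  have : u • h₀ ∈ (H : Set F) := hu ▸ Set.smul_mem_smul_set hh₀
  simpa [u, Units.smul_def, hh₀0] using this

theorem index_ne_two_of_inv_mem {F : Type*} [Field F] [Fintype F] (hF : 6 < Fintype.card F)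
    {K H : AddSubgroup F} (hKH : ∀ k ∈ K, k⁻¹ ∈ H) (hHK : ∀ h ∈ H, h⁻¹ ∈ K) :
    H.index ≠ 2 := by
  intro hindex
  have hcard : Fintype.card F = 2 * Nat.card H := by
    rw [← Nat.card_eq_fintype_card, ← H.card_mul_index, hindex, mul_comm]
  have : CharP F 2 := ringChar.of_eq (FiniteField.even_card_iff_char_two.2 (by omega))
  have hK : Nat.card K = Nat.card H := card_eq_of_inv_mem hKH hHK
  obtain ⟨⟨g, hg⟩, hg0⟩ := AddSubgroup.ne_bot_iff_exists_ne_zero.1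
    (mt (AddSubgroup.card_le_one_iff_eq_bot K).2 (by omega))
  have hg0 : g ≠ 0 := fun h => hg0 (Subtype.ext h)
  set M := MulAction.stabilizer Fˣ (H : Set F)
  have hMge : Nat.card K - 1 ≤ Nat.card M := by
    have hinj : Function.Injective fun k : ↥((K : Set F) \ {0}) =>
        (⟨_, sq_div_mem_stabilizer hKH hHK hg hg0 k.2.1 k.2.2⟩ : M) := by
      intro a b hab
      have := congrArg (fun u : M => ((u : Fˣ) : F)) hab
      simp only [Units.val_mk0] at this
      exact Subtype.ext ((div_left_inj' hg0).1 (CharTwo.sq_injective this))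
    have := Nat.card_le_card_of_injective _ hinj
    rwa [Nat.card_coe_set_eq, Set.ncard_sdiff_singleton_of_mem K.zero_mem,
      ← Nat.card_coe_set_eq] at this
  have hMdvd : Nat.card M ∣ Fintype.card F - 1 := by
    rw [← Nat.card_eq_fintype_card, ← Nat.card_units]
    exact M.card_subgroup_dvd_card
  have hMne : Nat.card M ≠ Fintype.card F - 1 := by
    rw [← Nat.card_eq_fintype_card, ← Nat.card_units, Ne, Subgroup.card_eq_iff_eq_top]
    refine fun hM => absurd hindex (ne_of_eq_of_ne (AddSubgroup.index_eq_one.2 ?_) (by decide))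
    exact AddSubgroup.eq_top_of_stabilizer_eq_top
      (mt (AddSubgroup.card_le_one_iff_eq_bot H).2 (by omega)) hM
  -- `|F| - 1` is odd, so its proper divisors are at most a third of it
  have hM3 : 3 * Nat.card M ≤ Fintype.card F - 1 := by
    obtain ⟨e, he⟩ := hMdvd
    rcases e with _ | _ | _ | e <;> [omega; omega; omega; nlinarith]
  omega

theorem AddSubgroup.eq_top_of_inv_add_sub_inv_mem {F : Type*} [Field F] [Fintype F]
    (hF : 6 < Fintype.card F) {K H : AddSubgroup F} (hKH : ∀ k ∈ K, k⁻¹ ∈ H)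
    (hHK : ∀ h ∈ H, h⁻¹ ∈ K) {t c : F} (ht : t ≠ 0) (hH : ∀ y, (y + t)⁻¹ - y⁻¹ - c ∈ H) :
    H = ⊤ := by
  by_contra hne
  refine index_ne_two_of_inv_mem hF hKH hHK (index_eq_two_of_card_le hne ?_ ?_)
  · rwa [Nat.card_eq_fintype_card]
  · rw [Nat.card_eq_fintype_card]
    exact card_le_two_mul_card_add_two ht hH

theorem image_eq_of_mem_of_apply_mem {V : Type*} {G : Subgroup (Equiv.Perm V)} {Bl : Set V}
    (hBl : ∀ g ∈ G, ⇑g '' Bl = Bl ∨ Disjoint (⇑g '' Bl) Bl) {g : Equiv.Perm V} (hg : g ∈ G)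
    {x : V} (hx : x ∈ Bl) (hgx : g x ∈ Bl) : ⇑g '' Bl = Bl :=
  (hBl g hg).resolve_right (Set.not_disjoint_iff.2 ⟨g x, ⟨x, hx, rfl⟩, hgx⟩)

section Blocks

variable {V : Type*} [AddCommGroup V] {G : Subgroup (Equiv.Perm V)} {Bl : Set V}

theorem add_mem_iff_mem_stabilizer (hG : ∀ k, Equiv.addRight k ∈ G)
    (hBl : ∀ g ∈ G, ⇑g '' Bl = Bl ∨ Disjoint (⇑g '' Bl) Bl) {b : V} (hb : b ∈ Bl) (d : V) :
    b + d ∈ Bl ↔ d ∈ AddAction.stabilizer V Bl := by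
  have himage : ⇑(Equiv.addRight d) '' Bl = d +ᵥ Bl := by
    rw [← Set.image_vadd]
    exact congrArg (· '' Bl) (funext fun x => add_comm x d)
  rw [AddAction.mem_stabilizer_iff, ← himage]
  refine ⟨image_eq_of_mem_of_apply_mem hBl (hG d) hb, fun h => ?_⟩
  rw [← h]
  exact ⟨b, hb, rfl⟩

theorem apply_sub_apply_mem_stabilizer (hG : ∀ k, Equiv.addRight k ∈ G)
    (hBl : ∀ g ∈ G, ⇑g '' Bl = Bl ∨ Disjoint (⇑g '' Bl) Bl) {b : V} (hb : b ∈ Bl)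
    {g : Equiv.Perm V} (hg : g ∈ G) {x y : V} (hxy : x - y ∈ AddAction.stabilizer V Bl) :
    g x - g y ∈ AddAction.stabilizer V Bl := by
  set h := Equiv.addRight (b - g y) * g * Equiv.addRight (y - b)
  have happly : ∀ z, h z = g (z + (y - b)) + (b - g y) := fun _ => rfl
  have hh : ⇑h '' Bl = Bl :=
    image_eq_of_mem_of_apply_mem hBl (mul_mem (mul_mem (hG _) hg) (hG _)) hb
      (by rwa [happly, add_sub_cancel, add_sub_cancel])
  rw [← add_mem_iff_mem_stabilizer hG hBl hb] at hxy ⊢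
  have := hh ▸ Set.mem_image_of_mem h hxy
  rw [happly, show b + (x - y) + (y - b) = x by abel] at this
  convert this using 1
  abel

theorem apply_sub_apply_mem_stabilizer_iff (hG : ∀ k, Equiv.addRight k ∈ G)
    (hBl : ∀ g ∈ G, ⇑g '' Bl = Bl ∨ Disjoint (⇑g '' Bl) Bl) {b : V} (hb : b ∈ Bl)
    {g : Equiv.Perm V} (hg : g ∈ G) (x y : V) :
    g x - g y ∈ AddAction.stabilizer V Bl ↔ x - y ∈ AddAction.stabilizer V Bl := by
  refine ⟨fun h => ?_, apply_sub_apply_mem_stabilizer hG hBl hb hg⟩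
  simpa using apply_sub_apply_mem_stabilizer hG hBl hb (inv_mem hg) h

end Blocks

section RoundFunctions

variable {V : Type*} [AddCommGroup V] (g : Equiv.Perm V)

def roundGroup : Subgroup (Equiv.Perm V) :=
  Subgroup.closure {f | ∃ k, f = Equiv.addRight k * g}

theorem addRight_mul_mem_roundGroup (k : V) : Equiv.addRight k * g ∈ roundGroup g :=
  Subgroup.subset_closure ⟨k, rfl⟩

theorem addRight_mem_roundGroup (k : V) : Equiv.addRight k ∈ roundGroup g := by
  convert mul_mem (addRight_mul_mem_roundGroup g k) (inv_mem (addRight_mul_mem_roundGroup g 0))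
    using 1
  ext x : 1
  simp

theorem exists_mem_roundGroup_apply_eq (x y : V) : ∃ f ∈ roundGroup g, f x = y :=
  ⟨_, addRight_mul_mem_roundGroup g (y - g x), by simp⟩

theorem apply_sub_apply_mem_stabilizer_iff_of_roundGroup {Bl : Set V}
    (hBl : ∀ f ∈ roundGroup g, ⇑f '' Bl = Bl ∨ Disjoint (⇑f '' Bl) Bl) {b : V} (hb : b ∈ Bl)
    (x y : V) :
    g x - g y ∈ AddAction.stabilizer V Bl ↔ x - y ∈ AddAction.stabilizer V Bl := by
  simpa using apply_sub_apply_mem_stabilizer_iff (addRight_mem_roundGroup g) hBl hb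
    (addRight_mul_mem_roundGroup g 0) x y

end RoundFunctions

namespace Matrix

variable {F : Type*} [Field F] {ι κ : Type*}

def InvMapsCosets (U U' : AddSubgroup (Matrix ι κ F)) : Prop :=
  ∀ x y : Matrix ι κ F, x.map (·⁻¹) - y.map (·⁻¹) ∈ U' ↔ x - y ∈ U

theorem single_map_inv [DecidableEq ι] [DecidableEq κ] (i : ι) (j : κ) (a : F) :
    (single i j a).map (·⁻¹) = single i j a⁻¹ := by
  ext i' j'
  simp only [map_apply, single_apply]
  split_ifs <;> simp

theorem mem_of_single_mem [Fintype ι] [Fintype κ] [DecidableEq ι] [DecidableEq κ]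
    {S : AddSubgroup (Matrix ι κ F)} {u v : Matrix ι κ F}
    (hS : ∀ i j, u i j ≠ 0 → ∀ e, single i j e ∈ S) (hv : ∀ i j, u i j = 0 → v i j = 0) :
    v ∈ S := by
  rw [matrix_eq_sum_single v]
  refine S.sum_mem fun i _ => S.sum_mem fun j _ => ?_
  by_cases hij : u i j = 0
  · simp [hv i j hij]
  · exact hS i j hij _

namespace InvMapsCosets

variable {U U' : AddSubgroup (Matrix ι κ F)}

theorem symm (h : InvMapsCosets U U') : InvMapsCosets U' U := fun x y => by
  simpa [Matrix.map_map, Function.comp_def] using (h (x.map (·⁻¹)) (y.map (·⁻¹))).symm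

theorem map_inv_mem (h : InvMapsCosets U U') {u : Matrix ι κ F} (hu : u ∈ U) :
    u.map (·⁻¹) ∈ U' := by
  simpa [Matrix.map_zero] using (h u 0).2 (by simpa using hu)

variable [Fintype F] [DecidableEq ι] [DecidableEq κ]

theorem single_mem (h : InvMapsCosets U U') (hF : 6 < Fintype.card F) {u : Matrix ι κ F}
    (hu : u ∈ U) {i : ι} {j : κ} (hij : u i j ≠ 0) (e : F) : single i j e ∈ U' := by
  set K := U.comap (singleAddMonoidHom i j)
  set H := U'.comap (singleAddMonoidHom i j)
  have hKH : ∀ k ∈ K, k⁻¹ ∈ H := fun k hk => by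
    simpa [H, single_map_inv] using h.map_inv_mem hk
  have hHK : ∀ k ∈ H, k⁻¹ ∈ K := fun k hk => by
    simpa [K, single_map_inv] using h.symm.map_inv_mem hk
  -- differencing at `single i j y` and at `0` cancels every entry of `u` but the `(i, j)` one
  have hdiff : ∀ y, (y + u i j)⁻¹ - y⁻¹ - (u i j)⁻¹ ∈ H := fun y => by
    have := U'.sub_mem ((h (single i j y + u) (single i j y)).2 (by simpa using hu))
      (h.map_inv_mem hu)
    rw [AddSubgroup.mem_comap]
    convert this using 1
    ext i' j'
    simp only [singleAddMonoidHom_apply, sub_apply, map_apply, add_apply, single_apply]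
    split_ifs with hij'
    · obtain ⟨rfl, rfl⟩ := hij'
      rfl
    · simp
  have hH := AddSubgroup.eq_top_of_inv_add_sub_inv_mem hF hKH hHK hij hdiff
  have : e ∈ H := hH ▸ AddSubgroup.mem_top e
  simpa [H] using this

theorem single_mem_left (h : InvMapsCosets U U') (hF : 6 < Fintype.card F) {u : Matrix ι κ F}
    (hu : u ∈ U) {i : ι} {j : κ} (hij : u i j ≠ 0) (e : F) : single i j e ∈ U :=
  h.symm.single_mem hF (h.map_inv_mem hu) (by simpa using hij) e

variable [Fintype ι] [Fintype κ]

theorem smul_mem (h : InvMapsCosets U U') (hF : 6 < Fintype.card F) (a : F)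
    {u : Matrix ι κ F} (hu : u ∈ U) : a • u ∈ U :=
  mem_of_single_mem (fun _ _ hij => h.single_mem_left hF hu hij) fun i j hij => by simp [hij]

theorem left_eq_right (h : InvMapsCosets U U') (hF : 6 < Fintype.card F) : U = U' :=
  le_antisymm (fun _ hu => mem_of_single_mem (fun _ _ => h.single_mem hF hu) fun _ _ => id)
    fun _ hu => mem_of_single_mem (fun _ _ => h.symm.single_mem hF hu) fun _ _ => id

theorem eq_bot_or_eq_top (hF : 6 < Fintype.card F) {A : F} (hA : A ≠ 0)
    {α : Matrix ι κ F →ₗ[F] Matrix ι κ F} (hα : Function.Surjective α)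
    (hinv : ∀ W : Submodule F (Matrix ι κ F), α '' (W : Set (Matrix ι κ F)) = W → W = ⊥ ∨ W = ⊤)
    {U : AddSubgroup (Matrix ι κ F)} (h : InvMapsCosets U (U.comap (A • α).toAddMonoidHom)) :
    U = ⊥ ∨ U = ⊤ := by
  have hαU : ∀ d, α d ∈ U ↔ d ∈ U := fun d =>
    (⟨h.smul_mem hF A, fun hd => by simpa [hA] using h.smul_mem hF A⁻¹ hd⟩ : α d ∈ U ↔ _).trans
      (SetLike.ext_iff.1 (h.left_eq_right hF) d).symm
  let W : Submodule F (Matrix ι κ F) := { U with smul_mem' := fun a _ => h.smul_mem hF a }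
  have hW : α '' (W : Set (Matrix ι κ F)) = W := by
    ext x
    refine ⟨fun ⟨y, hy, hyx⟩ => hyx ▸ (hαU y).2 hy, fun hx => ?_⟩
    obtain ⟨y, rfl⟩ := hα x
    exact ⟨y, (hαU y).1 hx, rfl⟩
  exact (hinv W hW).imp (congrArg Submodule.toAddSubgroup) (congrArg Submodule.toAddSubgroup)

end InvMapsCosets

end Matrix

theorem stmt_17_general (p r m n : ℕ) (hp : p.Prime) (hr : 4 < r)
    (F : Type*) [Field F] [Fintype F] (hF : Fintype.card F = p ^ r)
    (A B : F) (hA : A ≠ 0) (c : Fin m → Fin n)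
    (C : Matrix (Fin m) (Fin m) F)
    (lam piP rho : Equiv.Perm (Matrix (Fin m) (Fin n) F))
    (hlam : ∀ (a : Matrix (Fin m) (Fin n) F) (i : Fin m) (j : Fin n),
      lam a i j = A * (a i j)⁻¹ + B)
    (hpi : ∀ (a : Matrix (Fin m) (Fin n) F) (i : Fin m) (j : Fin n),
      piP a i j = a i (j - c i))
    (hrho : ∀ a : Matrix (Fin m) (Fin n) F, rho a = C * a)
    (hinv : ∀ W : Submodule F (Matrix (Fin m) (Fin n) F),
      (fun a => rho (piP a)) '' (W : Set (Matrix (Fin m) (Fin n) F)) = (W : Set (Matrix (Fin m) (Fin n) F)) →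
        W = ⊥ ∨ W = ⊤) :
    (∀ x y : Matrix (Fin m) (Fin n) F,
      ∃ g ∈ Subgroup.closure {f : Equiv.Perm (Matrix (Fin m) (Fin n) F) |
          ∃ k : Matrix (Fin m) (Fin n) F, f = Equiv.addRight k * rho * piP * lam},
        g x = y) ∧
    (∀ Bl : Set (Matrix (Fin m) (Fin n) F),
      (∀ g ∈ Subgroup.closure {f : Equiv.Perm (Matrix (Fin m) (Fin n) F) |
          ∃ k : Matrix (Fin m) (Fin n) F, f = Equiv.addRight k * rho * piP * lam},
        ⇑g '' Bl = Bl ∨ Disjoint (⇑g '' Bl) Bl) →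
      Bl = ∅ ∨ Bl = Set.univ ∨ ∃ x, Bl = {x}) := by
  simp only [mul_assoc]
  refine ⟨exists_mem_roundGroup_apply_eq _, fun Bl hBl => ?_⟩
  rcases Bl.eq_empty_or_nonempty with hBl0 | ⟨b, hb⟩
  · exact .inl hBl0
  have h6 : 6 < Fintype.card F := by
    rw [hF]
    calc 6 < 2 ^ 5 := by norm_num
      _ ≤ p ^ r := (Nat.pow_le_pow_left hp.two_le 5).trans (Nat.pow_le_pow_right hp.pos hr)
  let α := IsLinearMap.mk' (R := F) (fun a => rho (piP a))
    ⟨fun a b => by rw [hrho, hrho, hrho, ← Matrix.mul_add]; congr 1; ext; simp [hpi],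
     fun s a => by rw [hrho, hrho, ← Matrix.mul_smul]; congr 1; ext; simp [hpi]⟩
  have hlam_sub : ∀ x y, lam x - lam y = A • (x.map (·⁻¹) - y.map (·⁻¹)) := fun x y => by
    ext
    simp [hlam, mul_sub]
  have hU : Matrix.InvMapsCosets (AddAction.stabilizer _ Bl)
      ((AddAction.stabilizer _ Bl).comap (A • α).toAddMonoidHom) := fun x y => by
    have : (rho * (piP * lam)) x - (rho * (piP * lam)) y =
        (A • α) (x.map (·⁻¹) - y.map (·⁻¹)) := by
      rw [LinearMap.smul_apply, ← map_smul, ← hlam_sub, map_sub]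
      rfl
    rw [← apply_sub_apply_mem_stabilizer_iff_of_roundGroup _ hBl hb x y, this]
    rfl
  have hmemBl : ∀ x, x ∈ Bl ↔ x - b ∈ AddAction.stabilizer _ Bl := fun x => by
    rw [← add_mem_iff_mem_stabilizer (addRight_mem_roundGroup _) hBl hb, add_sub_cancel]
  rcases hU.eq_bot_or_eq_top h6 hA (piP.trans rho).surjective hinv with hU | hU
  · refine .inr (.inr ⟨b, Set.ext fun x => ?_⟩)
    rw [hmemBl, hU, AddSubgroup.mem_bot, sub_eq_zero]
    rfl
  · exact .inr (.inl (Set.eq_univ_of_forall fun x => by rw [hmemBl, hU]; trivial))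

/-- If the only `F`-linear subspaces of `V = M_{m,n}(GF(p^r))` (`r > 4`) invariant under
`α = ρ ∘ π` are `{0}` and `V`, then the group generated by the generalized Rijndael-like
round functions `T[k] = σ[k] ∘ ρ ∘ π ∘ λ` acts primitively on `V`: it is transitive and
its only blocks are `∅`, `V` and singletons. -/
theorem stmt_17 (p r m n : ℕ) (hp : p.Prime) (hr : 4 < r) (hm : 1 ≤ m) (hn : 1 ≤ n)
    (F : Type*) [Field F] [Fintype F] [DecidableEq F] (hF : Fintype.card F = p ^ r)
    (A B : F) (hA : A ≠ 0) (c : Fin m → Fin n)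
    (C : Matrix (Fin m) (Fin m) F) (hC : IsUnit C)
    (lam piP rho : Equiv.Perm (Matrix (Fin m) (Fin n) F))
    (hlam : ∀ (a : Matrix (Fin m) (Fin n) F) (i : Fin m) (j : Fin n),
      lam a i j = A * (a i j)⁻¹ + B)
    (hpi : ∀ (a : Matrix (Fin m) (Fin n) F) (i : Fin m) (j : Fin n),
      piP a i j = a i (j - c i))
    (hrho : ∀ a : Matrix (Fin m) (Fin n) F, rho a = C * a)
    (hinv : ∀ W : Submodule F (Matrix (Fin m) (Fin n) F),
      (fun a => rho (piP a)) '' (W : Set (Matrix (Fin m) (Fin n) F)) = (W : Set (Matrix (Fin m) (Fin n) F)) →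
        W = ⊥ ∨ W = ⊤) :
    (∀ x y : Matrix (Fin m) (Fin n) F,
      ∃ g ∈ Subgroup.closure {f : Equiv.Perm (Matrix (Fin m) (Fin n) F) |
          ∃ k : Matrix (Fin m) (Fin n) F, f = Equiv.addRight k * rho * piP * lam},
        g x = y) ∧
    (∀ Bl : Set (Matrix (Fin m) (Fin n) F),
      (∀ g ∈ Subgroup.closure {f : Equiv.Perm (Matrix (Fin m) (Fin n) F) |
          ∃ k : Matrix (Fin m) (Fin n) F, f = Equiv.addRight k * rho * piP * lam},
        ⇑g '' Bl = Bl ∨ Disjoint (⇑g '' Bl) Bl) →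
      Bl = ∅ ∨ Bl = Set.univ ∨ ∃ x, Bl = {x}) :=
  stmt_17_general p r m n hp hr F hF A B hA c C lam piP rho hlam hpi hrho hinv
end
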